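/- arXiv:1208.1430 — 9 statements merged into one kernel-verified Lean document; each statement's English description precedes it below -/
import Mathlib

section
/- Let F be an asymmetric norm on ℝ² and let u, v ∈ ℝ² ∖ {0}. Suppose F is differentiable at u and at v. Then u and v form an F-acute angle if and only if ⟨u, ∇F(v)⟩ ≥ 0 and ⟨v, ∇F(u)⟩ ≥ 0. -/
open scoped RealInnerProductSpace
open MeasureTheory Real

noncomputable section

abbrev E2 : Type := EuclideanSpace ℝ (Fin 2)

def mk2 (a b : ℝ) : E2 := WithLp.toLp 2 ![a, b]

def IsAsymNorm (F : E2 → ℝ) : Prop :=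
  ConvexOn ℝ Set.univ F ∧
  (∀ (c : ℝ), 0 ≤ c → ∀ u : E2, F (c • u) = c * F u) ∧
  (∀ u : E2, 0 ≤ F u) ∧
  (∀ u : E2, u ≠ 0 → 0 < F u)

def IsAcute (F : E2 → ℝ) (u v : E2) : Prop :=
  ∀ δ : ℝ, 0 ≤ δ → F u ≤ F (u + δ • v) ∧ F v ≤ F (v + δ • u)

noncomputable def kappa (F : E2 → ℝ) : ℝ :=
  sSup {r : ℝ | ∃ u v : E2, ‖u‖ = 1 ∧ ‖v‖ = 1 ∧ r = F u / F v}

def det2 (u v : E2) : ℝ := u 0 * v 1 - u 1 * v 0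

def IsIntVec (u : E2) : Prop := (∃ n : ℤ, u 0 = (n : ℝ)) ∧ (∃ n : ℤ, u 1 = (n : ℝ))

def eTheta (θ : ℝ) : E2 := mk2 (Real.cos θ) (Real.sin θ)

noncomputable def phiF (F : E2 → ℝ) (θ : ℝ) : ℝ :=
  Real.arctan (det2 (eTheta θ) (gradient F (eTheta θ)) / F (eTheta θ))

def rot2 (θ : ℝ) (w : E2) : E2 :=
  mk2 (Real.cos θ * w 0 - Real.sin θ * w 1) (Real.sin θ * w 0 + Real.cos θ * w 1)

def perp (z : E2) : E2 := mk2 (-(z 1)) (z 0)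

/-! The restriction `t ↦ F (u + t • v)` of the convex function `F` to a ray is convex, and a
convex function of one real variable is minimal at `0` on `[0, ∞)` exactly when its derivative
there, `⟪v, ∇F u⟫`, is nonnegative. -/

lemma HasDerivAt.nonneg_of_forall_le {g : ℝ → ℝ} {d a : ℝ} (hd : HasDerivAt g d a)
    (hmin : ∀ t, a ≤ t → g a ≤ g t) : 0 ≤ d := by
  have hloc : IsLocalMinOn g (Set.Ici a) a := IsMinOn.localize fun t ht ↦ hmin t ht
  have hcone : (1 : ℝ) ∈ posTangentConeAt (Set.Ici a) a :=
    mem_posTangentConeAt_of_segment_subset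
      ((segment_subset_Icc (by linarith)).trans Set.Icc_subset_Ici_self)
  simpa using hloc.hasFDerivWithinAt_nonneg hd.hasFDerivAt.hasFDerivWithinAt hcone

lemma ConvexOn.forall_le_iff_deriv_nonneg {g : ℝ → ℝ} {d a : ℝ} (hg : ConvexOn ℝ Set.univ g)
    (hd : HasDerivAt g d a) : (∀ t, a ≤ t → g a ≤ g t) ↔ 0 ≤ d := by
  refine ⟨hd.nonneg_of_forall_le, fun hd_nonneg t hat ↦ ?_⟩
  rcases hat.eq_or_lt with rfl | hat
  · rfl
  have := hg.le_slope_of_hasDerivAt (Set.mem_univ a) (Set.mem_univ t) hat hd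
  rw [slope_def_field] at this
  have := (le_div_iff₀ (sub_pos.2 hat)).1 (hd_nonneg.trans this)
  linarith

lemma ConvexOn.forall_le_add_smul_iff_fderiv_nonneg {E : Type*} [NormedAddCommGroup E]
    [NormedSpace ℝ E] {f : E → ℝ} (hf : ConvexOn ℝ Set.univ f) {x : E}
    (hd : DifferentiableAt ℝ f x) (v : E) :
    (∀ t : ℝ, 0 ≤ t → f x ≤ f (x + t • v)) ↔ 0 ≤ fderiv ℝ f x v := by
  have hline : ConvexOn ℝ Set.univ (fun t : ℝ ↦ f (x + t • v)) := by
    simpa [Function.comp_def, AffineMap.lineMap_apply, add_comm] using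
      hf.comp_affineMap (AffineMap.lineMap x (x + v))
  simpa using hline.forall_le_iff_deriv_nonneg (hd.hasFDerivAt.hasLineDerivAt v)

lemma fderiv_apply_eq_inner_gradient {F : Type*} [NormedAddCommGroup F] [InnerProductSpace ℝ F]
    [CompleteSpace F] (f : F → ℝ) (x v : F) : fderiv ℝ f x v = ⟪gradient f x, v⟫ := by
  rw [← toDual_gradient, InnerProductSpace.toDual_apply_apply]

theorem stmt0_general (F : E2 → ℝ) (hF : IsAsymNorm F) (u v : E2)
    (hdu : DifferentiableAt ℝ F u) (hdv : DifferentiableAt ℝ F v) :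
    IsAcute F u v ↔ 0 ≤ ⟪u, gradient F v⟫ ∧ 0 ≤ ⟪v, gradient F u⟫ := by
  have hacute_u := hF.1.forall_le_add_smul_iff_fderiv_nonneg hdu v
  have hacute_v := hF.1.forall_le_add_smul_iff_fderiv_nonneg hdv u
  rw [fderiv_apply_eq_inner_gradient, real_inner_comm] at hacute_u hacute_v
  simp only [IsAcute, imp_and, forall_and]
  rw [hacute_u, hacute_v, and_comm]

/-- Characterization of `F`-acute angles via gradients, for an
asymmetric norm `F` differentiable at `u` and `v`. -/
theorem stmt0 (F : E2 → ℝ) (hF : IsAsymNorm F) (u v : E2) (hu : u ≠ 0) (hv : v ≠ 0)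
    (hdu : DifferentiableAt ℝ F u) (hdv : DifferentiableAt ℝ F v) :
    IsAcute F u v ↔ 0 ≤ ⟪u, gradient F v⟫ ∧ 0 ≤ ⟪v, gradient F u⟫ :=
  stmt0_general F hF u v hdu hdv
end
end

section
/- (Causality Property) Let F be an asymmetric norm on ℝ², let u, v ∈ ℝ² be linearly independent, and let d_u, d_v ∈ ℝ. Assume that u and v form an F-acute angle. Define d_w := min over t ∈ [0,1] of t·d_u + (1−t)·d_v + F(t·u + (1−t)·v), and assume that this minimum is not attained at t = 0 nor at t = 1. Then d_u < d_w and d_v < d_w. -/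
/-! At an interior minimiser `t` with `w = t • u + (1 - t) • v`, acuteness and homogeneity give
`F w ≥ (1 - t) F v` and `F w ≥ t F u`. Hence `d_w ≥ t d_u + (1 - t) (d_v + F v) > t d_u + (1 - t) d_w`
since `d_v + F v = f 0 > d_w`, i.e. `d_u < d_w`; symmetrically `d_v < d_w`. -/

open scoped RealInnerProductSpace
open MeasureTheory Real

noncomputable section

theorem IsAcute.symm {F : E2 → ℝ} {u v : E2} (h : IsAcute F u v) : IsAcute F v u :=
  fun δ hδ => (h δ hδ).symm

theorem IsAcute.mul_le_apply_smul_add_smul {F : E2 → ℝ}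
    (hhom : ∀ c : ℝ, 0 ≤ c → ∀ u : E2, F (c • u) = c * F u) {u v : E2} (h : IsAcute F u v)
    {a b : ℝ} (ha : 0 ≤ a) (hb : 0 < b) : b * F v ≤ F (a • u + b • v) := by
  have hw : a • u + b • v = b • (v + (a / b) • u) := by
    rw [smul_add, smul_smul, mul_div_cancel₀ a hb.ne', add_comm]
  rw [hw, hhom b hb.le]
  exact mul_le_mul_of_nonneg_left (h (a / b) (div_nonneg ha hb.le)).2 hb.le

theorem IsAcute.mul_le_apply_smul_add_smul' {F : E2 → ℝ}
    (hhom : ∀ c : ℝ, 0 ≤ c → ∀ u : E2, F (c • u) = c * F u) {u v : E2} (h : IsAcute F u v)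
    {a b : ℝ} (ha : 0 < a) (hb : 0 ≤ b) : a * F u ≤ F (a • u + b • v) := by
  rw [add_comm]
  exact h.symm.mul_le_apply_smul_add_smul hhom hb ha

theorem IsLeast.exists_mem_Ioo_of_image_Icc {f : ℝ → ℝ} {m : ℝ}
    (hmin : IsLeast (f '' Set.Icc 0 1) m) (h0 : f 0 ≠ m) (h1 : f 1 ≠ m) :
    ∃ t ∈ Set.Ioo (0 : ℝ) 1, f t = m ∧ m < f 0 ∧ m < f 1 := by
  obtain ⟨⟨t, ⟨ht0, ht1⟩, hft⟩, hlb⟩ := hmin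
  refine ⟨t, ⟨ht0.lt_of_ne ?_, ht1.lt_of_ne ?_⟩, hft,
    (hlb ⟨0, by simp, rfl⟩).lt_of_ne h0.symm, (hlb ⟨1, by simp, rfl⟩).lt_of_ne h1.symm⟩
  · rintro rfl; exact h0 hft
  · rintro rfl; exact h1 hft

theorem stmt2_general (F : E2 → ℝ) (hF : IsAsymNorm F) (u v : E2)
    (du dv dw : ℝ) (f : ℝ → ℝ)
    (hf : ∀ t : ℝ, f t = t * du + (1 - t) * dv + F (t • u + (1 - t) • v))
    (hacute : IsAcute F u v)
    (hmin : IsLeast (f '' Set.Icc (0:ℝ) 1) dw)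
    (h0 : f 0 ≠ dw) (h1 : f 1 ≠ dw) :
    du < dw ∧ dv < dw := by
  obtain ⟨t, ⟨ht0, ht1⟩, hft, hlt0, hlt1⟩ := hmin.exists_mem_Ioo_of_image_Icc h0 h1
  have hFv : (1 - t) * F v ≤ F (t • u + (1 - t) • v) :=
    hacute.mul_le_apply_smul_add_smul hF.2.1 ht0.le (sub_pos.2 ht1)
  have hFu : t * F u ≤ F (t • u + (1 - t) • v) :=
    hacute.mul_le_apply_smul_add_smul' hF.2.1 ht0 (sub_pos.2 ht1).le
  have hf0 : f 0 = dv + F v := by simp [hf]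
  have hf1 : f 1 = du + F u := by simp [hf]
  rw [hf] at hft
  constructor
  · nlinarith
  · nlinarith

/-- Causality Property: if `u, v` are linearly independent and form an
`F`-acute angle, and the minimum `d_w` of `t ↦ t d_u + (1-t) d_v + F(t u + (1-t) v)`
over `[0,1]` is not attained at `t = 0` nor `t = 1`, then `d_u < d_w` and `d_v < d_w`. -/
theorem stmt2 (F : E2 → ℝ) (hF : IsAsymNorm F) (u v : E2)
    (hli : LinearIndependent ℝ ![u, v]) (du dv dw : ℝ) (f : ℝ → ℝ)
    (hf : ∀ t : ℝ, f t = t * du + (1 - t) * dv + F (t • u + (1 - t) • v))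
    (hacute : IsAcute F u v)
    (hmin : IsLeast (f '' Set.Icc (0:ℝ) 1) dw)
    (h0 : f 0 ≠ dw) (h1 : f 1 ≠ dw) :
    du < dw ∧ dv < dw :=
  stmt2_general F hF u v du dv dw f hf hacute hmin h0 h1
end
end

section
/- Let u, v ∈ ℤ² satisfy |det(u,v)| = 1 and ⟨u,v⟩ ≥ 0 (the non-zero vertices of an elementary triangle). Then the following are equivalent: (i) u and v both belong to {(1,0), (−1,0), (0,1), (0,−1)}; (ii) ‖u‖ = ‖v‖; (iii) ⟨u,v⟩ < min{‖u‖², ‖v‖²}. -/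
open scoped RealInnerProductSpace
open MeasureTheory Real

noncomputable section

/-!
By Lagrange's identity `‖u‖² ‖v‖² = ⟪u, v⟫² + det(u, v)²`, the integers `P = ‖u‖²`,
`Q = ‖v‖²` and `s = ⟪u, v⟫ ≥ 0` satisfy `P Q = s² + 1`. Each of (ii) `P = Q` and
(iii) `s < P, s < Q` then forces `(s + 1)² ≤ P Q`, hence `s = 0` and `P = Q = 1`, which is (i).
-/

lemma inner_eq_coord (u v : E2) : ⟪u, v⟫ = u 0 * v 0 + u 1 * v 1 := by
  simp only [PiLp.inner_apply, Fin.sum_univ_two, RCLike.inner_apply, conj_trivial]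
  ring

lemma norm_sq_eq_coord (u : E2) : ‖u‖ ^ 2 = u 0 ^ 2 + u 1 ^ 2 := by
  rw [← real_inner_self_eq_norm_sq, inner_eq_coord]
  ring

lemma norm_sq_mul_norm_sq_eq_inner_sq_add_det2_sq (u v : E2) :
    ‖u‖ ^ 2 * ‖v‖ ^ 2 = ⟪u, v⟫ ^ 2 + det2 u v ^ 2 := by
  rw [norm_sq_eq_coord, norm_sq_eq_coord, inner_eq_coord, det2]
  ring

lemma IsIntVec.exists_eq_mk2 {u : E2} (hu : IsIntVec u) : ∃ m n : ℤ, u = mk2 m n := by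
  obtain ⟨⟨m, hm⟩, ⟨n, hn⟩⟩ := hu
  refine ⟨m, n, ?_⟩
  ext i
  fin_cases i <;> simp [mk2, hm, hn]

lemma IsIntVec.exists_inner_eq_intCast {u v : E2} (hu : IsIntVec u) (hv : IsIntVec v) :
    ∃ k : ℤ, ⟪u, v⟫ = k := by
  obtain ⟨⟨m, hm⟩, ⟨n, hn⟩⟩ := hu
  obtain ⟨⟨p, hp⟩, ⟨q, hq⟩⟩ := hv
  exact ⟨m * p + n * q, by rw [inner_eq_coord, hm, hn, hp, hq]; push_cast; ring⟩

lemma Int.cases_of_sq_add_sq_eq_one {m n : ℤ} (h : m ^ 2 + n ^ 2 = 1) :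
    (m = 1 ∧ n = 0) ∨ (m = -1 ∧ n = 0) ∨ (m = 0 ∧ n = 1) ∨ (m = 0 ∧ n = -1) := by
  obtain ⟨_, _⟩ : -1 ≤ m ∧ m ≤ 1 := by constructor <;> nlinarith [sq_nonneg n]
  obtain ⟨_, _⟩ : -1 ≤ n ∧ n ≤ 1 := by constructor <;> nlinarith [sq_nonneg m]
  interval_cases m <;> interval_cases n <;> simp_all

lemma mk2_inj {a b c d : ℝ} : mk2 a b = mk2 c d ↔ a = c ∧ b = d := by
  simp [mk2]

lemma norm_mk2_eq_one_iff {a b : ℝ} : ‖mk2 a b‖ = 1 ↔ a ^ 2 + b ^ 2 = 1 := by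
  rw [← pow_eq_one_iff_of_nonneg (norm_nonneg _) two_ne_zero, norm_sq_eq_coord]
  simp [mk2]

lemma mem_axisUnits_iff {u : E2} (hu : IsIntVec u) :
    u ∈ ({mk2 1 0, mk2 (-1) 0, mk2 0 1, mk2 0 (-1)} : Set E2) ↔ ‖u‖ = 1 := by
  obtain ⟨m, n, rfl⟩ := hu.exists_eq_mk2
  rw [norm_mk2_eq_one_iff]
  constructor
  · rintro (h | h | h | h) <;> obtain ⟨hm, hn⟩ := mk2_inj.mp h <;> rw [hm, hn] <;> norm_num
  · intro h
    rcases Int.cases_of_sq_add_sq_eq_one (by exact_mod_cast h) with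
      ⟨rfl, rfl⟩ | ⟨rfl, rfl⟩ | ⟨rfl, rfl⟩ | ⟨rfl, rfl⟩ <;> simp

namespace Int

variable {P Q s : ℤ}

lemma eq_one_and_eq_one_of_mul_eq_sq_add_one (hs : 0 ≤ s) (h : P * Q = s ^ 2 + 1)
    (hsP : s < P) (hsQ : s < Q) : P = 1 ∧ Q = 1 := by
  have hs0 : s = 0 := by
    nlinarith [mul_le_mul (add_one_le_of_lt hsP) (add_one_le_of_lt hsQ) (by omega) (by omega)]
  subst hs0
  constructor <;> nlinarith

lemma lt_of_mul_self_eq_sq_add_one (hP : 0 ≤ P) (h : P * P = s ^ 2 + 1) : s < P := by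
  nlinarith

lemma eq_one_and_eq_one_iff_of_mul_eq_sq_add_one (hs : 0 ≤ s) (hP : 0 ≤ P)
    (h : P * Q = s ^ 2 + 1) :
    (P = Q ↔ P = 1 ∧ Q = 1) ∧ (s < P ∧ s < Q ↔ P = 1 ∧ Q = 1) := by
  refine ⟨⟨fun hPQ ↦ ?_, fun ⟨hP1, hQ1⟩ ↦ hP1.trans hQ1.symm⟩,
    ⟨fun ⟨hsP, hsQ⟩ ↦ eq_one_and_eq_one_of_mul_eq_sq_add_one hs h hsP hsQ, ?_⟩⟩
  · subst hPQ
    have hsP := lt_of_mul_self_eq_sq_add_one hP h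
    exact eq_one_and_eq_one_of_mul_eq_sq_add_one hs h hsP hsP
  · rintro ⟨rfl, rfl⟩
    have : s = 0 := by nlinarith
    omega

end Int

/-- for `u, v ∈ ℤ²` with `|det(u,v)| = 1` and `⟨u,v⟩ ≥ 0`, the following
are equivalent: (i) `u, v ∈ {(1,0),(-1,0),(0,1),(0,-1)}`; (ii) `‖u‖ = ‖v‖`;
(iii) `⟨u,v⟩ < min{‖u‖², ‖v‖²}`. -/
theorem stmt3 (u v : E2) (hu : IsIntVec u) (hv : IsIntVec v)
    (hdet : |det2 u v| = 1) (hs : 0 ≤ ⟪u, v⟫) :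
    ((u ∈ ({mk2 1 0, mk2 (-1) 0, mk2 0 1, mk2 0 (-1)} : Set E2) ∧
      v ∈ ({mk2 1 0, mk2 (-1) 0, mk2 0 1, mk2 0 (-1)} : Set E2)) ↔ ‖u‖ = ‖v‖) ∧
    (‖u‖ = ‖v‖ ↔ ⟪u, v⟫ < min (‖u‖ ^ 2) (‖v‖ ^ 2)) := by
  obtain ⟨s, hs_eq⟩ := hu.exists_inner_eq_intCast hv
  obtain ⟨P, hP⟩ := hu.exists_inner_eq_intCast hu
  obtain ⟨Q, hQ⟩ := hv.exists_inner_eq_intCast hv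
  rw [real_inner_self_eq_norm_sq] at hP hQ
  have hPQ : P * Q = s ^ 2 + 1 := by
    have := norm_sq_mul_norm_sq_eq_inner_sq_add_det2_sq u v
    rw [hP, hQ, hs_eq, ← sq_abs (det2 u v), hdet] at this
    exact_mod_cast this
  have norm_eq_one_iff {w : E2} {R : ℤ} (hR : ‖w‖ ^ 2 = R) : ‖w‖ = 1 ↔ R = 1 := by
    rw [← pow_eq_one_iff_of_nonneg (norm_nonneg w) two_ne_zero, hR, Int.cast_eq_one]
  have hunits := (mem_axisUnits_iff hu).trans (norm_eq_one_iff hP)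
  have hunits' := (mem_axisUnits_iff hv).trans (norm_eq_one_iff hQ)
  have hnorm : ‖u‖ = ‖v‖ ↔ P = Q := by
    rw [← sq_eq_sq₀ (norm_nonneg u) (norm_nonneg v), hP, hQ, Int.cast_inj]
  have hmin : ⟪u, v⟫ < min (‖u‖ ^ 2) (‖v‖ ^ 2) ↔ s < P ∧ s < Q := by
    rw [hs_eq, hP, hQ, lt_min_iff, Int.cast_lt, Int.cast_lt]
  obtain ⟨hPQ_eq, hPQ_lt⟩ := Int.eq_one_and_eq_one_iff_of_mul_eq_sq_add_one
    (Int.cast_nonneg_iff.mp (hs_eq ▸ hs)) (Int.cast_nonneg_iff.mp (hP ▸ sq_nonneg ‖u‖)) hPQ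
  rw [hunits, hunits', hnorm, hmin, hPQ_eq, hPQ_lt]
  exact ⟨.rfl, .rfl⟩
end
end

section
/- Let F be an asymmetric norm on ℝ² and let u, v ∈ ℝ² ∖ {0} form an F-acute angle. Then u and u+v form an F-acute angle, and v and u+v form an F-acute angle. -/
open scoped RealInnerProductSpace
open MeasureTheory Real

noncomputable section

/-! An `F`-acute angle means that `u` minimises `F` on the ray `u + [0, ∞) • v` and `v` on the ray
`v + [0, ∞) • u`. Minimality of `w` on `w + [0, ∞) • z` passes to the ray `w + [0, ∞) • (w + z)`
by positive homogeneity, since `w + δ • (w + z)` is a positive multiple `(1 + δ) ≥ 1` of a point of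
the first ray; and it passes to `w + z` on `w + z + [0, ∞) • z` by convexity, since `w + z` lies
between `w` and any point beyond it on the ray. -/

section

variable {E : Type*} [AddCommGroup E] [Module ℝ E]

def IsMinOnRay (F : E → ℝ) (w z : E) : Prop :=
  ∀ s : ℝ, 0 ≤ s → F w ≤ F (w + s • z)

theorem IsMinOnRay.add_self {F : E → ℝ} {w z : E}
    (hhom : ∀ c : ℝ, 0 ≤ c → ∀ u : E, F (c • u) = c * F u) (hw : 0 ≤ F w)
    (h : IsMinOnRay F w z) : IsMinOnRay F w (w + z) := by
  intro δ hδ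
  have hδ' : 0 < 1 + δ := by linarith
  have hrescale : w + δ • (w + z) = (1 + δ) • (w + (δ / (1 + δ)) • z) := by
    rw [smul_add, smul_add, smul_smul, mul_div_cancel₀ δ hδ'.ne']
    module
  calc F w ≤ (1 + δ) * F w := le_mul_of_one_le_left hw (by linarith)
    _ ≤ (1 + δ) * F (w + (δ / (1 + δ)) • z) :=
      mul_le_mul_of_nonneg_left (h _ (div_nonneg hδ hδ'.le)) hδ'.le
    _ = F (w + δ • (w + z)) := by rw [hrescale, hhom _ hδ'.le]

theorem IsMinOnRay.add_of_convexOn {F : E → ℝ} {w z : E} (hF : ConvexOn ℝ Set.univ F)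
    (h : IsMinOnRay F w z) : IsMinOnRay F (w + z) z := by
  intro δ hδ
  have hδ' : 0 < 1 + δ := by linarith
  have hsum : δ / (1 + δ) + 1 / (1 + δ) = 1 := by field_simp; ring
  have hmid : (δ / (1 + δ)) • w + (1 / (1 + δ)) • (w + (1 + δ) • z) = w + z := by
    rw [smul_add, smul_smul, one_div_mul_cancel hδ'.ne', one_smul, ← add_assoc, ← add_smul,
      hsum, one_smul]
  have := hF.le_right_of_left_le' (Set.mem_univ w) (Set.mem_univ (w + (1 + δ) • z))
    (div_nonneg hδ hδ'.le) (one_div_pos.2 hδ') hsum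
    (by rw [hmid]; simpa using h 1 zero_le_one)
  rwa [hmid, add_smul, one_smul, ← add_assoc] at this

end

theorem isAcute_iff (F : E2 → ℝ) (u v : E2) :
    IsAcute F u v ↔ IsMinOnRay F u v ∧ IsMinOnRay F v u :=
  forall₂_and

theorem stmt6_general (F : E2 → ℝ) (hF : IsAsymNorm F) (u v : E2)
    (hacute : IsAcute F u v) :
    IsAcute F u (u + v) ∧ IsAcute F v (u + v) := by
  obtain ⟨hconv, hhom, hnonneg, -⟩ := hF
  obtain ⟨huv, hvu⟩ := (isAcute_iff F u v).1 hacute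
  have hvu_shift : IsMinOnRay F (u + v) u := add_comm v u ▸ hvu.add_of_convexOn hconv
  have hvu_self : IsMinOnRay F v (u + v) := add_comm v u ▸ hvu.add_self hhom (hnonneg v)
  exact ⟨(isAcute_iff _ _ _).2 ⟨huv.add_self hhom (hnonneg u), hvu_shift⟩,
    (isAcute_iff _ _ _).2 ⟨hvu_self, huv.add_of_convexOn hconv⟩⟩

/-- if `u, v` form an `F`-acute angle, then so do `u, u+v` and `v, u+v`. -/
theorem stmt6 (F : E2 → ℝ) (hF : IsAsymNorm F) (u v : E2) (hu : u ≠ 0) (hv : v ≠ 0)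
    (hacute : IsAcute F u v) :
    IsAcute F u (u + v) ∧ IsAcute F v (u + v) :=
  stmt6_general F hF u v hacute
end
end

section
/- Let M be a 2×2 symmetric positive definite matrix, let F(w) := √⟨w, M w⟩, and let λ be the smallest eigenvalue of M. Let u, v ∈ ℤ² satisfy |det(u,v)| = 1 and ⟨u,v⟩ ≥ 0, and suppose u and v do NOT form an F-acute angle. Then there exists t ∈ (0,1) such that t·u + (1−t)·v is an eigenvector of M associated with the eigenvalue λ. -/
/-!
Write `Q w = ⟪w, M w⟫`. Since `Q (u + δ v) = Q u + 2 δ ⟪u, M v⟫ + δ² Q v`, the failure of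
`F`-acuteness forces `⟪u, M v⟫ < 0`. Let `e` be a `λ`-eigenvector; its rotation `f` by a right
angle is an eigenvector for `μ = tr M - λ ≥ λ`. In the orthogonal basis `(e, f)` the hypotheses
read `α α' + β β' ≥ 0` and `λ α α' + μ β β' < 0` with `λ ≥ 0`, which forces `β β' < 0`. So the
`f`-coordinates of `u` and `v` have opposite signs and some convex combination of `u` and `v`
lies on the eigenline `ℝ e`; it is nonzero because `det (u, v) ≠ 0`.
-/

open scoped RealInnerProductSpace
open MeasureTheory Real

noncomputable section

open Matrix

lemma exists_mem_Ioo_add_eq_zero_of_mul_neg {a b : ℝ} (h : a * b < 0) :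
    ∃ t ∈ Set.Ioo (0 : ℝ) 1, t * a + (1 - t) * b = 0 := by
  have hab : b - a ≠ 0 := sub_ne_zero.mpr fun hba => by
    rw [hba] at h; exact (mul_self_nonneg a).not_gt h
  refine ⟨b / (b - a), ⟨?_, ?_⟩, by field_simp; ring⟩
  · rcases lt_or_gt_of_ne hab with h' | h'
    · exact div_pos_of_neg_of_neg (by nlinarith) h'
    · exact div_pos (by nlinarith) h'
  · rcases lt_or_gt_of_ne hab with h' | h'
    · rw [div_lt_one_of_neg h']; nlinarith
    · rw [div_lt_one h']; nlinarith

lemma Matrix.IsSymm.dotProduct_mulVec_comm {n : Type*} [Fintype n] {R : Type*} [CommSemiring R]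
    {M : Matrix n n R} (hM : M.IsSymm) (x y : n → R) : x ⬝ᵥ M *ᵥ y = y ⬝ᵥ M *ᵥ x := by
  rw [dotProduct_mulVec, ← mulVec_transpose, hM.eq, dotProduct_comm]

lemma Matrix.IsSymm.dotProduct_mulVec_add_smul {n : Type*} [Fintype n] {R : Type*} [CommRing R]
    {M : Matrix n n R} (hM : M.IsSymm) (x y : n → R) (δ : R) :
    (x + δ • y) ⬝ᵥ M *ᵥ (x + δ • y) =
      x ⬝ᵥ M *ᵥ x + 2 * δ * (x ⬝ᵥ M *ᵥ y) + δ ^ 2 * (y ⬝ᵥ M *ᵥ y) := by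
  simp only [mulVec_add, mulVec_smul, add_dotProduct, dotProduct_add, smul_dotProduct,
    dotProduct_smul, smul_eq_mul, hM.dotProduct_mulVec_comm y x]
  ring

lemma Matrix.PosSemidef.isSymm {n : Type*} {M : Matrix n n ℝ} (hM : M.PosSemidef) : M.IsSymm :=
  isHermitian_iff_isSymm.mp hM.isHermitian

lemma Matrix.PosSemidef.dotProduct_mulVec_le_add_smul {n : Type*} [Fintype n]
    {M : Matrix n n ℝ} (hM : M.PosSemidef) {x y : n → ℝ} (hxy : 0 ≤ x ⬝ᵥ M *ᵥ y) {δ : ℝ}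
    (hδ : 0 ≤ δ) : x ⬝ᵥ M *ᵥ x ≤ (x + δ • y) ⬝ᵥ M *ᵥ (x + δ • y) := by
  rw [hM.isSymm.dotProduct_mulVec_add_smul]
  have hy := hM.dotProduct_mulVec_nonneg y
  rw [star_trivial] at hy
  nlinarith [mul_nonneg hδ hxy, mul_nonneg (sq_nonneg δ) hy]

lemma Matrix.PosSemidef.nonneg_of_mulVec_eq_smul {n : Type*} [Fintype n] {M : Matrix n n ℝ}
    (hM : M.PosSemidef) {e : n → ℝ} (he0 : e ≠ 0) {lam : ℝ} (he : M *ᵥ e = lam • e) :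
    0 ≤ lam := by
  have h := hM.dotProduct_mulVec_nonneg e
  rw [star_trivial, he, dotProduct_smul, smul_eq_mul] at h
  exact nonneg_of_mul_nonneg_left h (by simpa using dotProduct_star_self_pos_iff.mpr he0)

lemma EuclideanSpace.inner_toLp_mulVec {n : Type*} [Fintype n] (M : Matrix n n ℝ)
    (w : EuclideanSpace ℝ n) : ⟪w, WithLp.toLp 2 (M *ᵥ w)⟫ = w.ofLp ⬝ᵥ M *ᵥ w.ofLp := by
  rw [EuclideanSpace.inner_eq_star_dotProduct, star_trivial, dotProduct_comm]

section Rot90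

variable {R : Type*} [CommRing R]

def rot90 (x : Fin 2 → R) : Fin 2 → R := ![-x 1, x 0]

lemma rot90_dotProduct_rot90 (x y : Fin 2 → R) : rot90 x ⬝ᵥ rot90 y = x ⬝ᵥ y := by
  simp [rot90, dotProduct, Fin.sum_univ_two]; ring

lemma dotProduct_rot90_self (x : Fin 2 → R) : x ⬝ᵥ rot90 x = 0 := by
  simp [rot90, dotProduct, Fin.sum_univ_two]; ring

lemma rot90_eq_zero_iff {x : Fin 2 → R} : rot90 x = 0 ↔ x = 0 := by
  simp [rot90, funext_iff, Fin.forall_fin_two, and_comm]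

lemma dotProduct_self_smul_eq (e x : Fin 2 → R) :
    (e ⬝ᵥ e) • x = (x ⬝ᵥ e) • e + (x ⬝ᵥ rot90 e) • rot90 e := by
  ext i; fin_cases i <;> simp [rot90, dotProduct, Fin.sum_univ_two] <;> ring

lemma Matrix.IsSymm.mulVec_rot90 {M : Matrix (Fin 2) (Fin 2) R} (hM : M.IsSymm) {e : Fin 2 → R}
    {lam : R} (he : M *ᵥ e = lam • e) : M *ᵥ rot90 e = (M.trace - lam) • rot90 e := by
  have h0 := congrFun he 0
  have h1 := congrFun he 1
  have hsymm := hM.apply 0 1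
  simp [mulVec, dotProduct, Fin.sum_univ_two] at h0 h1
  ext i; fin_cases i <;> simp [rot90, mulVec, dotProduct, Fin.sum_univ_two, trace_fin_two]
  · linear_combination h1 - e 0 * hsymm
  · linear_combination -h0 - e 1 * hsymm

end Rot90

lemma dotProduct_mulVec_eq_of_eigenvectors {M : Matrix (Fin 2) (Fin 2) ℝ} {e : Fin 2 → ℝ}
    (he0 : e ≠ 0) {lam μ : ℝ} (he : M *ᵥ e = lam • e) (hf : M *ᵥ rot90 e = μ • rot90 e)
    (x y : Fin 2 → ℝ) :
    (e ⬝ᵥ e) * (x ⬝ᵥ M *ᵥ y) =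
      lam * ((x ⬝ᵥ e) * (y ⬝ᵥ e)) + μ * ((x ⬝ᵥ rot90 e) * (y ⬝ᵥ rot90 e)) := by
  have hee : e ⬝ᵥ e ≠ 0 := dotProduct_self_eq_zero.not.mpr he0
  have hx := dotProduct_self_smul_eq e x
  have hy := dotProduct_self_smul_eq e y
  have hexpand : (e ⬝ᵥ e) * ((e ⬝ᵥ e) * (x ⬝ᵥ M *ᵥ y)) =
      ((e ⬝ᵥ e) • x) ⬝ᵥ M *ᵥ ((e ⬝ᵥ e) • y) := by
    simp only [mulVec_smul, smul_dotProduct, dotProduct_smul, smul_eq_mul]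
  rw [hx, hy] at hexpand
  simp only [mulVec_add, mulVec_smul, he, hf, add_dotProduct, dotProduct_add, smul_dotProduct,
    dotProduct_smul, smul_eq_mul, dotProduct_rot90_self, rot90_dotProduct_rot90] at hexpand
  rw [dotProduct_comm (rot90 e) e, dotProduct_rot90_self] at hexpand
  apply mul_left_cancel₀ hee
  linear_combination hexpand

lemma mulVec_eq_smul_of_dotProduct_rot90_eq_zero {M : Matrix (Fin 2) (Fin 2) ℝ} {e x : Fin 2 → ℝ}
    (he0 : e ≠ 0) {lam : ℝ} (he : M *ᵥ e = lam • e) (hx : x ⬝ᵥ rot90 e = 0) :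
    M *ᵥ x = lam • x := by
  have hee : e ⬝ᵥ e ≠ 0 := dotProduct_self_eq_zero.not.mpr he0
  have hdecomp : (e ⬝ᵥ e) • x = (x ⬝ᵥ e) • e := by
    simpa [hx] using dotProduct_self_smul_eq e x
  apply smul_right_injective _ hee
  dsimp only
  rw [← mulVec_smul, hdecomp, mulVec_smul, he, smul_comm, ← hdecomp, smul_comm]

lemma mul_dotProduct_rot90_neg {M : Matrix (Fin 2) (Fin 2) ℝ} {e : Fin 2 → ℝ} (he0 : e ≠ 0)
    {lam μ : ℝ} (he : M *ᵥ e = lam • e) (hf : M *ᵥ rot90 e = μ • rot90 e) (hlam : 0 ≤ lam)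
    (hle : lam ≤ μ) {x y : Fin 2 → ℝ} (hxy : 0 ≤ x ⬝ᵥ y) (hMxy : x ⬝ᵥ M *ᵥ y < 0) :
    (x ⬝ᵥ rot90 e) * (y ⬝ᵥ rot90 e) < 0 := by
  have hee : 0 < e ⬝ᵥ e := by simpa using dotProduct_star_self_pos_iff.mpr he0
  have hM := dotProduct_mulVec_eq_of_eigenvectors he0 he hf x y
  -- the same expansion for `M = 1`, i.e. for the Euclidean inner product
  have hI := dotProduct_mulVec_eq_of_eigenvectors (M := 1) he0 (lam := 1) (μ := 1)
    (by rw [one_mulVec, one_smul]) (by rw [one_mulVec, one_smul]) x y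
  rw [one_mulVec, one_mul, one_mul] at hI
  by_contra! h
  nlinarith [mul_nonneg hlam (mul_nonneg hee.le hxy), mul_nonneg (sub_nonneg.mpr hle) h,
    mul_pos hee (neg_pos.mpr hMxy)]

lemma isAcute_of_dotProduct_mulVec_nonneg {M : Matrix (Fin 2) (Fin 2) ℝ} (hM : M.PosSemidef)
    {F : E2 → ℝ} (hF : ∀ w : E2, F w = √⟪w, (WithLp.toLp 2 (M *ᵥ w) : E2)⟫) {u v : E2}
    (huv : 0 ≤ u.ofLp ⬝ᵥ M *ᵥ v.ofLp) : IsAcute F u v := by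
  have hvu : 0 ≤ v.ofLp ⬝ᵥ M *ᵥ u.ofLp := by rwa [hM.isSymm.dotProduct_mulVec_comm]
  intro δ hδ
  simp only [hF, EuclideanSpace.inner_toLp_mulVec]
  simp only [WithLp.ofLp_add, WithLp.ofLp_smul]
  exact ⟨Real.sqrt_le_sqrt (hM.dotProduct_mulVec_le_add_smul huv hδ),
    Real.sqrt_le_sqrt (hM.dotProduct_mulVec_le_add_smul hvu hδ)⟩

theorem stmt9_general (M : Matrix (Fin 2) (Fin 2) ℝ) (hM : M.PosDef)
    (F : E2 → ℝ) (hF : ∀ w : E2, F w = Real.sqrt ⟪w, (WithLp.toLp 2 (M.mulVec w) : E2)⟫)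
    (lam : ℝ) (hlam : Module.End.HasEigenvalue M.mulVecLin lam)
    (hlam_min : ∀ μ : ℝ, Module.End.HasEigenvalue M.mulVecLin μ → lam ≤ μ)
    (u v : E2)
    (hdet : |det2 u v| = 1) (hs : 0 ≤ ⟪u, v⟫)
    (hnot : ¬ IsAcute F u v) :
    ∃ t : ℝ, t ∈ Set.Ioo (0:ℝ) 1 ∧ (t • u + (1 - t) • v) ≠ 0 ∧
      M.mulVec (t • u + (1 - t) • v) = lam • ((t • u + (1 - t) • v : E2) : Fin 2 → ℝ) := by
  obtain ⟨e, he_mem, he0⟩ := hlam.exists_hasEigenvector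
  have he : M *ᵥ e = lam • e := by simpa using Module.End.mem_eigenspace_iff.mp he_mem
  have hf : M *ᵥ rot90 e = (M.trace - lam) • rot90 e := hM.posSemidef.isSymm.mulVec_rot90 he
  have hle : lam ≤ M.trace - lam := hlam_min _ (Module.End.hasEigenvalue_of_hasEigenvector
    ⟨Module.End.mem_eigenspace_iff.mpr (by simpa using hf), rot90_eq_zero_iff.not.mpr he0⟩)
  have hMuv : u.ofLp ⬝ᵥ M *ᵥ v.ofLp < 0 := by
    by_contra! h
    exact hnot (isAcute_of_dotProduct_mulVec_nonneg hM.posSemidef hF h)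
  rw [EuclideanSpace.inner_eq_star_dotProduct, star_trivial, dotProduct_comm] at hs
  obtain ⟨t, ht, ht0⟩ := exists_mem_Ioo_add_eq_zero_of_mul_neg <|
    mul_dotProduct_rot90_neg he0 he hf (hM.posSemidef.nonneg_of_mulVec_eq_smul he0 he) hle hs hMuv
  refine ⟨t, ht, ?_, ?_⟩
  · intro h0
    have key : t * det2 u v = det2 (t • u + (1 - t) • v) v := by simp [det2]; ring
    rw [h0, show det2 0 v = 0 by simp [det2]] at key
    rcases mul_eq_zero.mp key with h | h
    · exact ht.1.ne' h
    · simp [h] at hdet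
  · simp only [WithLp.ofLp_add, WithLp.ofLp_smul]
    exact mulVec_eq_smul_of_dotProduct_rot90_eq_zero he0 he
      (by simpa [add_dotProduct, smul_dotProduct] using ht0)

/-- if the non-zero vertices `u, v` of an elementary triangle do not form
an `F`-acute angle, for `F(w) = √⟨w, M w⟩`, then the triangle contains an eigenvector
for the smallest eigenvalue `λ` of `M` in its interior. -/
theorem stmt9 (M : Matrix (Fin 2) (Fin 2) ℝ) (hMsymm : M.IsSymm) (hM : M.PosDef)
    (F : E2 → ℝ) (hF : ∀ w : E2, F w = Real.sqrt ⟪w, (WithLp.toLp 2 (M.mulVec w) : E2)⟫)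
    (lam : ℝ) (hlam : Module.End.HasEigenvalue M.mulVecLin lam)
    (hlam_min : ∀ μ : ℝ, Module.End.HasEigenvalue M.mulVecLin μ → lam ≤ μ)
    (u v : E2) (hu : IsIntVec u) (hv : IsIntVec v)
    (hdet : |det2 u v| = 1) (hs : 0 ≤ ⟪u, v⟫)
    (hnot : ¬ IsAcute F u v) :
    ∃ t : ℝ, t ∈ Set.Ioo (0:ℝ) 1 ∧ (t • u + (1 - t) • v) ≠ 0 ∧
      M.mulVec (t • u + (1 - t) • v) = lam • ((t • u + (1 - t) • v : E2) : Fin 2 → ℝ) :=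
  stmt9_general M hM F hF lam hlam hlam_min u v hdet hs hnot
end
end

section
/- Let F be an asymmetric norm on ℝ² that is C¹ on ℝ² ∖ {0}. Then φ_F is right-Lipschitz with constant 1: for all θ ∈ ℝ and all h ≥ 0, φ_F(θ + h) ≥ φ_F(θ) − h; equivalently, the function θ ↦ θ + φ_F(θ) is non-decreasing on ℝ. -/
open scoped RealInnerProductSpace
open MeasureTheory Real

noncomputable section

/-!
Let `g = ∇F(e_θ)`. Euler's identity gives `⟪g, e_θ⟫ = F(e_θ)` and convexity gives the subgradient
inequality `⟪g, v⟫ ≤ F(v)`; tested against `v = e_{θ+h}` this reads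
`cos h · F(e_θ) + sin h · det(e_θ, g) ≤ F(e_{θ+h})`, and symmetrically from `e_{θ+h}` back to `e_θ`.
With `A = φ_F(θ)` and `B = φ_F(θ+h)` the two inequalities become
`F(e_θ) cos(h - A) ≤ F(e_{θ+h}) cos A` and `F(e_{θ+h}) cos(h + B) ≤ F(e_θ) cos B`, whose product
`cos(h - A) cos(h + B) ≤ cos A cos B` is, by the product-to-sum formula, impossible when `B < A - h`.
-/

section Convex

variable {E : Type*} [NormedAddCommGroup E] [NormedSpace ℝ E] {F : E → ℝ} {f' : E →L[ℝ] ℝ} {u : E}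

theorem HasFDerivAt.apply_self_eq_of_homogeneous (hf : HasFDerivAt F f' u)
    (hhom : ∀ c : ℝ, 0 ≤ c → F (c • u) = c * F u) : f' u = F u := by
  have hray : HasDerivAt (fun t : ℝ => F (t • u)) (f' u) 1 := by
    refine HasFDerivAt.comp_hasDerivAt (f := fun t : ℝ => t • u) 1 ?_ ?_
    · rwa [one_smul]
    · simpa using (hasDerivAt_id (1 : ℝ)).smul_const u
  have hlin : HasDerivAt (fun t : ℝ => F (t • u)) (F u) 1 := by
    refine (hasDerivAt_mul_const (F u)).congr_of_eventuallyEq ?_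
    filter_upwards [Ioi_mem_nhds one_pos] with t ht using hhom t (le_of_lt ht)
  exact hray.unique hlin

theorem ConvexOn.apply_sub_le_of_hasFDerivAt (hconv : ConvexOn ℝ Set.univ F)
    (hf : HasFDerivAt F f' u) (v : E) : f' (v - u) ≤ F v - F u := by
  have hline : ConvexOn ℝ Set.univ (F ∘ AffineMap.lineMap (k := ℝ) u v) :=
    hconv.comp_affineMap (AffineMap.lineMap (k := ℝ) u v)
  have hderiv : HasDerivAt (F ∘ AffineMap.lineMap (k := ℝ) u v) (f' (v - u)) 0 := by
    refine HasFDerivAt.comp_hasDerivAt (0 : ℝ) ?_ AffineMap.hasDerivAt_lineMap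
    simpa using hf
  simpa [slope_def_field] using
    hline.le_slope_of_hasDerivAt (Set.mem_univ 0) (Set.mem_univ 1) one_pos hderiv

end Convex

theorem mul_cos_sub_arctan_div (h D : ℝ) {a : ℝ} (ha : a ≠ 0) :
    a * cos (h - arctan (D / a)) = (cos h * a + sin h * D) * cos (arctan (D / a)) := by
  rw [cos_sub, sin_arctan, cos_arctan]
  field_simp

theorem cos_mul_cos_lt_cos_sub_mul_cos_add {A B h : ℝ} (hA : A < π / 2) (hB : -(π / 2) < B)
    (hh : 0 < h) (hBA : B + h < A) : cos A * cos B < cos (h - A) * cos (h + B) := by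
  have hcos : cos (A - B) < cos (A - B - 2 * h) := by
    rw [← cos_abs (A - B - 2 * h)]
    exact cos_lt_cos_of_nonneg_of_le_pi (abs_nonneg _) (by linarith)
      (abs_lt.2 ⟨by linarith, by linarith⟩)
  have hprod : ∀ x y : ℝ, cos x * cos y = (cos (x - y) + cos (x + y)) / 2 := fun x y => by
    rw [cos_sub, cos_add]; ring
  rw [hprod, hprod, show h - A - (h + B) = -(A + B) by ring, cos_neg,
    show h - A + (h + B) = -(A - B - 2 * h) by ring, cos_neg]
  linarith

theorem arctan_div_sub_le_arctan_div {a b D₁ D₂ h : ℝ} (ha : 0 < a) (hb : 0 < b) (hh : 0 < h)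
    (h₁ : cos h * a + sin h * D₁ ≤ b) (h₂ : cos h * b - sin h * D₂ ≤ a) :
    arctan (D₁ / a) - h ≤ arctan (D₂ / b) := by
  set A := arctan (D₁ / a)
  set B := arctan (D₂ / b)
  by_contra! hBA
  have hcosA : 0 < cos A := cos_arctan_pos _
  have hcosB : 0 < cos B := cos_arctan_pos _
  have hcosBh : 0 < cos (h + B) :=
    cos_pos_of_mem_Ioo ⟨by linarith [neg_pi_div_two_lt_arctan (D₂ / b)],
      by linarith [arctan_lt_pi_div_two (D₁ / a)]⟩
  have hA : a * cos (h - A) ≤ b * cos A := by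
    rw [mul_cos_sub_arctan_div h D₁ ha.ne']
    exact mul_le_mul_of_nonneg_right h₁ hcosA.le
  have hB : b * cos (h + B) ≤ a * cos B := by
    have := mul_cos_sub_arctan_div h (-D₂) hb.ne'
    rw [neg_div, arctan_neg, sub_neg_eq_add, cos_neg] at this
    rw [this]
    exact mul_le_mul_of_nonneg_right (by linarith) hcosB.le
  have hlt := cos_mul_cos_lt_cos_sub_mul_cos_add (arctan_lt_pi_div_two (D₁ / a))
    (neg_pi_div_two_lt_arctan (D₂ / b)) hh (by linarith)
  linarith [mul_lt_mul_of_pos_left hlt ha, mul_le_mul_of_nonneg_right hA hcosBh.le,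
    mul_le_mul_of_nonneg_right hB hcosA.le]

theorem inner_eq_mul_add_mul (x y : E2) : ⟪x, y⟫ = x 0 * y 0 + x 1 * y 1 := by
  simp only [PiLp.inner_apply, Fin.sum_univ_two, RCLike.inner_apply, conj_trivial]
  ring

theorem eTheta_ne_zero (θ : ℝ) : eTheta θ ≠ 0 := by
  intro h
  have hcos : cos θ = 0 := by simpa [eTheta, mk2] using congrArg (· 0) h
  have hsin : sin θ = 0 := by simpa [eTheta, mk2] using congrArg (· 1) h
  simpa [hcos, hsin] using sin_sq_add_cos_sq θ

theorem inner_eTheta_add (g : E2) (θ h : ℝ) :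
    ⟪g, eTheta (θ + h)⟫ = cos h * ⟪g, eTheta θ⟫ + sin h * det2 (eTheta θ) g := by
  simp only [eTheta, mk2, cos_add, sin_add, inner_eq_mul_add_mul, Matrix.cons_val_zero,
    Matrix.cons_val_one, Matrix.cons_val_fin_one, det2]
  ring

theorem ContDiffOn.hasGradientAt_of_ne_zero {E : Type*} [NormedAddCommGroup E]
    [InnerProductSpace ℝ E] [CompleteSpace E] {F : E → ℝ} (hC1 : ContDiffOn ℝ 1 F {0}ᶜ) {u : E}
    (hu : u ≠ 0) : HasGradientAt F (gradient F u) u :=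
  ((hC1.contDiffAt (isOpen_compl_singleton.mem_nhds hu)).differentiableAt one_ne_zero).hasGradientAt

namespace IsAsymNorm

variable {F : E2 → ℝ}

theorem inner_gradient_self (hF : IsAsymNorm F) (hC1 : ContDiffOn ℝ 1 F {0}ᶜ)
    {u : E2} (hu : u ≠ 0) : ⟪gradient F u, u⟫ = F u :=
  (hC1.hasGradientAt_of_ne_zero hu).hasFDerivAt.apply_self_eq_of_homogeneous
    fun c hc => hF.2.1 c hc u

theorem inner_gradient_le (hF : IsAsymNorm F) (hC1 : ContDiffOn ℝ 1 F {0}ᶜ)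
    {u : E2} (hu : u ≠ 0) (v : E2) : ⟪gradient F u, v⟫ ≤ F v := by
  have hsub := hF.1.apply_sub_le_of_hasFDerivAt (hC1.hasGradientAt_of_ne_zero hu).hasFDerivAt v
  simp only [map_sub, InnerProductSpace.toDual_apply_apply] at hsub
  linarith [inner_gradient_self hF hC1 hu]

theorem cos_mul_add_sin_mul_det2_le (hF : IsAsymNorm F) (hC1 : ContDiffOn ℝ 1 F {0}ᶜ)
    (θ h : ℝ) :
    cos h * F (eTheta θ) + sin h * det2 (eTheta θ) (gradient F (eTheta θ)) ≤
      F (eTheta (θ + h)) := by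
  rw [← inner_gradient_self hF hC1 (eTheta_ne_zero θ), ← inner_eTheta_add]
  exact inner_gradient_le hF hC1 (eTheta_ne_zero θ) _

theorem phiF_sub_le_phiF_add (hF : IsAsymNorm F) (hC1 : ContDiffOn ℝ 1 F {0}ᶜ)
    {θ h : ℝ} (hh : 0 ≤ h) : phiF F θ - h ≤ phiF F (θ + h) := by
  rcases hh.eq_or_lt with rfl | hpos
  · simp
  have hback := cos_mul_add_sin_mul_det2_le hF hC1 (θ + h) (-h)
  rw [cos_neg, sin_neg, add_neg_cancel_right, neg_mul, ← sub_eq_add_neg] at hback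
  exact arctan_div_sub_le_arctan_div (hF.2.2.2 _ (eTheta_ne_zero θ))
    (hF.2.2.2 _ (eTheta_ne_zero (θ + h))) hpos (cos_mul_add_sin_mul_det2_le hF hC1 θ h) hback

end IsAsymNorm

/-- `φ_F` is right-Lipschitz with constant 1:
`φ_F(θ+h) ≥ φ_F(θ) − h` for `h ≥ 0`; equivalently `θ ↦ θ + φ_F(θ)` is non-decreasing. -/
theorem stmt12 (F : E2 → ℝ) (hF : IsAsymNorm F) (hC1 : ContDiffOn ℝ 1 F {(0 : E2)}ᶜ) :
    (∀ θ h : ℝ, 0 ≤ h → phiF F θ - h ≤ phiF F (θ + h)) ∧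
    Monotone (fun θ : ℝ => θ + phiF F θ) := by
  refine ⟨fun θ h hh => hF.phiF_sub_le_phiF_add hC1 hh, fun x y hxy => ?_⟩
  have := hF.phiF_sub_le_phiF_add hC1 (θ := x) (sub_nonneg.2 hxy)
  rw [add_sub_cancel] at this
  dsimp only
  linarith
end
end

section
/- Let κ ≥ 1 and let F be the anisotropic euclidean norm F(x,y) := √(κ⁻¹x² + κy²), associated to the diagonal matrix with entries (κ⁻¹, κ). Then κ(F) = κ, and the function φ_F attains its maximum over ℝ at θ_κ := arctan(κ⁻¹), with maximum value φ_F(θ_κ) = arctan((κ − κ⁻¹)/2). -/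
/-! For `F(w) = √(a w₀² + b w₁²)` the gradient at `e_θ` is `F(e_θ)⁻¹ (a cos θ, b sin θ)`, so
`tan φ_F(θ) = (b - a) sin θ cos θ / (a cos² θ + b sin² θ)`. With `(a, b) = (κ⁻¹, κ)`, AM-GM gives
`2 sin θ cos θ ≤ κ⁻¹ cos² θ + κ sin² θ`, with equality iff `cos θ = κ sin θ`, i.e. `θ = arctan κ⁻¹`;
since `arctan` is monotone this is where `φ_F` is maximal. The anisotropy ratio is `√(b / a)`:
on the unit circle `F` ranges over `[√a, √b]`, with the extremes at the coordinate axes. -/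

open scoped RealInnerProductSpace
open MeasureTheory Real

noncomputable section

def diagNorm (a b : ℝ) (w : E2) : ℝ := √(a * w 0 ^ 2 + b * w 1 ^ 2)

lemma sq_add_sq_eq_one_of_norm_eq_one {u : E2} (hu : ‖u‖ = 1) : u 0 ^ 2 + u 1 ^ 2 = 1 := by
  simpa [Fin.sum_univ_two, hu] using (EuclideanSpace.real_norm_sq_eq u).symm

lemma sqrt_le_diagNorm {a b : ℝ} (hab : a ≤ b) {u : E2} (hu : ‖u‖ = 1) :
    √a ≤ diagNorm a b u := by
  have h := sq_add_sq_eq_one_of_norm_eq_one hu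
  refine Real.sqrt_le_sqrt ?_
  linear_combination -a * h + mul_nonneg (sub_nonneg.2 hab) (sq_nonneg (u 1))

lemma diagNorm_le_sqrt {a b : ℝ} (hab : a ≤ b) {u : E2} (hu : ‖u‖ = 1) :
    diagNorm a b u ≤ √b := by
  have h := sq_add_sq_eq_one_of_norm_eq_one hu
  refine Real.sqrt_le_sqrt ?_
  linear_combination b * h + mul_nonneg (sub_nonneg.2 hab) (sq_nonneg (u 0))

lemma norm_mk2 (x y : ℝ) : ‖mk2 x y‖ = √(x ^ 2 + y ^ 2) := by
  simp [EuclideanSpace.norm_eq, mk2, Fin.sum_univ_two]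

lemma kappa_diagNorm {a b : ℝ} (ha : 0 < a) (hab : a ≤ b) :
    kappa (diagNorm a b) = √(b / a) := by
  refine IsGreatest.csSup_eq ⟨⟨mk2 0 1, mk2 1 0, by simp [norm_mk2], by simp [norm_mk2], ?_⟩, ?_⟩
  · simp [diagNorm, mk2, Real.sqrt_div' _ ha.le]
  · rintro r ⟨u, v, hu, hv, rfl⟩
    rw [Real.sqrt_div' _ ha.le]
    exact div_le_div₀ (Real.sqrt_nonneg b) (diagNorm_le_sqrt hab hu) (Real.sqrt_pos.2 ha)
      (sqrt_le_diagNorm hab hv)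

lemma two_mul_mul_le_inv_mul_sq_add_mul_sq {κ : ℝ} (hκ : 0 < κ) (x y : ℝ) :
    2 * x * y ≤ κ⁻¹ * x ^ 2 + κ * y ^ 2 := by
  have hsq : 0 ≤ κ⁻¹ * (x - κ * y) ^ 2 := by positivity
  have hexpand : κ⁻¹ * (x - κ * y) ^ 2 = κ⁻¹ * x ^ 2 + κ * y ^ 2 - 2 * x * y := by
    field_simp
    ring
  linarith

lemma mul_sq_add_mul_sq_pos {a b : ℝ} (ha : 0 < a) (hb : 0 < b) {x y : ℝ}
    (hxy : x ≠ 0 ∨ y ≠ 0) : 0 < a * x ^ 2 + b * y ^ 2 := by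
  rcases hxy with h | h
  · exact add_pos_of_pos_of_nonneg (mul_pos ha (sq_pos_of_ne_zero h)) (by positivity)
  · exact add_pos_of_nonneg_of_pos (by positivity) (mul_pos hb (sq_pos_of_ne_zero h))

lemma hasGradientAt_diagNorm (a b : ℝ) {p : E2} (hp : 0 < a * p 0 ^ 2 + b * p 1 ^ 2) :
    HasGradientAt (diagNorm a b) ((diagNorm a b p)⁻¹ • mk2 (a * p 0) (b * p 1)) p := by
  have hcoord (i : Fin 2) : HasFDerivAt (fun w : E2 => w i) (EuclideanSpace.proj (𝕜 := ℝ) i) p :=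
    (EuclideanSpace.proj (𝕜 := ℝ) i).hasFDerivAt
  have hsqrt := ((((hcoord 0).pow 2).const_mul a).add (((hcoord 1).pow 2).const_mul b)).sqrt hp.ne'
  rw [hasGradientAt_iff_hasFDerivAt]
  refine hsqrt.congr_fderiv (ContinuousLinearMap.ext fun v => ?_)
  have hs : diagNorm a b p ≠ 0 := (Real.sqrt_pos.2 hp).ne'
  simp only [diagNorm, mk2, Pi.add_apply, one_div, nsmul_eq_mul, Nat.cast_ofNat, pow_one,
    Nat.add_one_sub_one, add_apply, smul_apply, PiLp.proj_apply, smul_eq_mul, map_smul, InnerProductSpace.toDual_apply_apply,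
    PiLp.inner_apply, RCLike.inner_apply, conj_trivial, Fin.sum_univ_two,
    Matrix.cons_val_zero, Matrix.cons_val_one] at hs ⊢
  field_simp

lemma phiF_diagNorm {a b : ℝ} (ha : 0 < a) (hb : 0 < b) (θ : ℝ) :
    phiF (diagNorm a b) θ =
      arctan ((b - a) * (sin θ * cos θ / (a * cos θ ^ 2 + b * sin θ ^ 2))) := by
  have hQ : 0 < a * cos θ ^ 2 + b * sin θ ^ 2 := mul_sq_add_mul_sq_pos ha hb <| by
    by_contra! h
    simpa [h.1, h.2] using sin_sq_add_cos_sq θ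
  rw [phiF, (hasGradientAt_diagNorm a b (p := eTheta θ) hQ).gradient]
  congr 1
  simp only [det2, eTheta, diagNorm, mk2, PiLp.smul_apply, PiLp.toLp_apply, smul_eq_mul,
    Matrix.cons_val_zero, Matrix.cons_val_one]
  have hsq := Real.sq_sqrt hQ.le
  have hs : √(a * cos θ ^ 2 + b * sin θ ^ 2) ≠ 0 := (Real.sqrt_pos.2 hQ).ne'
  generalize √(a * cos θ ^ 2 + b * sin θ ^ 2) = s at hsq hs ⊢
  rw [← hsq]
  field_simp

lemma sin_mul_cos_div_le_half {κ : ℝ} (hκ : 0 < κ) (θ : ℝ) :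
    sin θ * cos θ / (κ⁻¹ * cos θ ^ 2 + κ * sin θ ^ 2) ≤ 1 / 2 := by
  refine div_le_of_le_mul₀ (by positivity) (by norm_num) ?_
  linarith [two_mul_mul_le_inv_mul_sq_add_mul_sq hκ (cos θ) (sin θ)]

lemma sin_mul_cos_div_eq_half_at_arctan_inv {κ : ℝ} (hκ : 0 < κ) :
    sin (arctan κ⁻¹) * cos (arctan κ⁻¹) /
      (κ⁻¹ * cos (arctan κ⁻¹) ^ 2 + κ * sin (arctan κ⁻¹) ^ 2) = 1 / 2 := by
  have hs : 0 < sin (arctan κ⁻¹) := sin_arctan_pos.2 (inv_pos.2 hκ)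
  have hc : cos (arctan κ⁻¹) = κ * sin (arctan κ⁻¹) := by
    have := tan_arctan κ⁻¹
    rw [tan_eq_sin_div_cos, div_eq_iff (cos_arctan_pos _).ne'] at this
    rw [this, ← mul_assoc, mul_inv_cancel₀ hκ.ne', one_mul]
  rw [hc]
  field_simp
  ring

/-- for `F(x,y) = √(κ⁻¹x² + κy²)` with `κ ≥ 1`, one has `κ(F) = κ` and
`φ_F` attains its maximum over `ℝ` at `θ_κ = arctan(κ⁻¹)`, with value
`arctan((κ − κ⁻¹)/2)`. -/
theorem stmt16 (κ : ℝ) (hκ : 1 ≤ κ) (F : E2 → ℝ)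
    (hF : ∀ w : E2, F w = Real.sqrt (κ⁻¹ * (w 0) ^ 2 + κ * (w 1) ^ 2)) :
    kappa F = κ ∧
    (∀ θ : ℝ, phiF F θ ≤ phiF F (Real.arctan κ⁻¹)) ∧
    phiF F (Real.arctan κ⁻¹) = Real.arctan ((κ - κ⁻¹) / 2) := by
  have hκ0 : 0 < κ := by linarith
  have hκκ : κ⁻¹ ≤ κ := (inv_le_one_of_one_le₀ hκ).trans hκ
  obtain rfl : F = diagNorm κ⁻¹ κ := funext hF
  have hφ := phiF_diagNorm (inv_pos.2 hκ0) hκ0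
  have hφ_max : phiF (diagNorm κ⁻¹ κ) (arctan κ⁻¹) = arctan ((κ - κ⁻¹) / 2) := by
    rw [hφ, sin_mul_cos_div_eq_half_at_arctan_inv hκ0, mul_one_div]
  refine ⟨?_, fun θ => ?_, hφ_max⟩
  · rw [kappa_diagNorm (inv_pos.2 hκ0) hκκ, div_inv_eq_mul, ← sq, Real.sqrt_sq hκ0.le]
  · rw [hφ, hφ, sin_mul_cos_div_eq_half_at_arctan_inv hκ0]
    exact arctan_strictMono.monotone <|
      mul_le_mul_of_nonneg_left (sin_mul_cos_div_le_half hκ0 θ) (sub_nonneg.2 hκκ)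
end
end

section
/- There exists an absolute constant C such that the following holds. Let 0 < ε ≤ π/6 and let Φ : [0, 2π] → (0, π) be continuous with: (i) Φ(t) ≥ 2ε for all t; (ii) t ↦ Φ(t) − t non-increasing on [0, 2π]; (iii) ∫ from t to t' of cot(Φ(s)) ds ≤ |ln ε| for all 0 ≤ t ≤ t' ≤ 2π. Then any finite sequence 0 = t₀ < t₁ < ⋯ < t_N ≤ 2π satisfying Φ(t_{n+1}) = ε + (t_{n+1} − t_n) for all 0 ≤ n < N has length N ≤ C·|ln ε|. -/
open scoped RealInnerProductSpace
open MeasureTheory Real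

noncomputable section

/-!
Call step `n` good when `Φ(tₙ) + (tₙ₊₁ - tₙ) ≤ π/2`. On a good step, (ii) gives
`Φ(s) ≤ Φ(tₙ) + (s - tₙ) ≤ π/2`, and `cot q ≥ 1/q - 1` on `(0, π/2]`, so with `x = Φ(tₙ)` and
`h = tₙ₊₁ - tₙ` the step contributes `∫ cot Φ ≥ log ((x + h) / x) - h`. As `Φ(tₙ₊₁) = ε + h` and
`x ≥ 2ε`, we have `(x + h)² ≥ 2 x Φ(tₙ₊₁)`, so this is at least
`(log 2 + log Φ(tₙ₊₁) - log Φ(tₙ)) / 2 - h`. Summed over a run of consecutive good steps this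
telescopes, and (iii) together with `2ε ≤ Φ < π` bounds the length of the run by `O(|ln ε|)`.
A bad step `n ≥ 1` forces `tₙ - tₙ₋₁` or `tₙ₊₁ - tₙ` to exceed `π/6`, which happens for at most
twelve steps; so there are at most `25` bad steps and at most `26` runs.
-/

open Set
open scoped Finset

lemma Real.inv_sub_one_le_cot {q : ℝ} (hq : 0 < q) (hq' : q ≤ π / 2) : q⁻¹ - 1 ≤ cot q := by
  have hsin : 0 < sin q := sin_pos_of_pos_of_lt_pi hq (by linarith [pi_pos])
  have hcos : 0 ≤ cos q := cos_nonneg_of_mem_Icc ⟨by linarith, hq'⟩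
  have hsum : 1 ≤ sin q + cos q := by
    nlinarith [sin_sq_add_cos_sq q, sin_le_one q, cos_le_one q]
  calc q⁻¹ - 1 ≤ (sin q)⁻¹ - 1 := by gcongr; exact sin_le hq.le
    _ = (1 - sin q) / sin q := by field_simp
    _ ≤ cos q / sin q := by gcongr; linarith
    _ = cot q := (cot_eq_cos_div_sin q).symm

lemma intervalIntegrable_cot_comp {Φ : ℝ → ℝ} {a b : ℝ} (hab : a ≤ b)
    (hΦc : ContinuousOn Φ (Icc a b)) (hΦ : ∀ s ∈ Icc a b, Φ s ∈ Ioo 0 π) :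
    IntervalIntegrable (fun s => cot (Φ s)) volume a b := by
  refine ContinuousOn.intervalIntegrable_of_Icc hab ?_
  simp only [cot_eq_cos_div_sin]
  exact (continuous_cos.comp_continuousOn hΦc).div (continuous_sin.comp_continuousOn hΦc)
    fun s hs => (sin_pos_of_pos_of_lt_pi (hΦ s hs).1 (hΦ s hs).2).ne'

lemma log_add_sub_log_sub_le_integral_cot {Φ : ℝ → ℝ} {a b : ℝ} (hab : a ≤ b)
    (hΦc : ContinuousOn Φ (Icc a b)) (hΦpos : ∀ s ∈ Icc a b, 0 < Φ s)
    (hslope : ∀ s ∈ Icc a b, Φ s - s ≤ Φ a - a) (hgood : Φ a + (b - a) ≤ π / 2) :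
    log (Φ a + (b - a)) - log (Φ a) - (b - a) ≤ ∫ s in a..b, cot (Φ s) := by
  set c := Φ a - a
  have hc : 0 < a + c := by simpa [c] using hΦpos a ⟨le_rfl, hab⟩
  have hle : ∀ s ∈ Icc a b, Φ s ≤ s + c := fun s hs => by linarith [hslope s hs]
  have hpt : ∀ s ∈ Icc a b, (s + c)⁻¹ - 1 ≤ cot (Φ s) := fun s hs =>
    calc (s + c)⁻¹ - 1 ≤ (Φ s)⁻¹ - 1 := by gcongr; exacts [hΦpos s hs, hle s hs]
      _ ≤ cot (Φ s) := Real.inv_sub_one_le_cot (hΦpos s hs) (by linarith [hle s hs, hs.2])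
  have hinv : ContinuousOn (fun s => (s + c)⁻¹) (Icc a b) :=
    (continuousOn_id.add continuousOn_const).inv₀ fun s hs => (by linarith [hs.1] : 0 < s + c).ne'
  have hcomp : ∫ s in a..b, ((s + c)⁻¹ - 1) = log (Φ a + (b - a)) - log (Φ a) - (b - a) := by
    rw [intervalIntegral.integral_sub (hinv.intervalIntegrable_of_Icc hab) intervalIntegrable_const,
      intervalIntegral.integral_comp_add_right (fun x => x⁻¹), integral_inv_of_pos hc (by linarith),
      log_div (by linarith) hc.ne', intervalIntegral.integral_const, smul_eq_mul, mul_one]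
    simp only [c]
    ring_nf
  rw [← hcomp]
  exact intervalIntegral.integral_mono_on hab
    ((hinv.intervalIntegrable_of_Icc hab).sub intervalIntegrable_const)
    (intervalIntegrable_cot_comp hab hΦc fun s hs =>
      ⟨hΦpos s hs, by linarith [hle s hs, hs.2, pi_pos]⟩) hpt

lemma mul_log_two_le_integral_cot {ε : ℝ} {Φ : ℝ → ℝ} {t : ℕ → ℝ} {k : ℕ} (hε : 0 < ε)
    (hΦc : ContinuousOn Φ (Icc (t 0) (t k))) (hΦ2ε : ∀ s ∈ Icc (t 0) (t k), 2 * ε ≤ Φ s)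
    (hslope : ∀ s ∈ Icc (t 0) (t k), ∀ s' ∈ Icc (t 0) (t k), s ≤ s' → Φ s' - s' ≤ Φ s - s)
    (ht : MonotoneOn t (Iic k)) (hstep : ∀ i < k, Φ (t (i + 1)) = ε + (t (i + 1) - t i))
    (hgood : ∀ i < k, Φ (t i) + (t (i + 1) - t i) ≤ π / 2) :
    k * log 2 ≤ 2 * (∫ s in t 0..t k, cot (Φ s)) + log (Φ (t 0)) - log (Φ (t k))
      + 2 * (t k - t 0) := by
  have hle : ∀ i < k, t i ≤ t (i + 1) := fun i hi =>
    ht (by simp; omega) (by simp; omega) (Nat.le_succ i)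
  have hsub : ∀ i < k, Icc (t i) (t (i + 1)) ⊆ Icc (t 0) (t k) := fun i hi =>
    Icc_subset_Icc (ht (by simp) (by simp; omega) (Nat.zero_le i))
      (ht (by simp; omega) (by simp) hi)
  have hpos : ∀ s ∈ Icc (t 0) (t k), 0 < Φ s := fun s hs => by linarith [hΦ2ε s hs]
  have hslope' : ∀ i < k, ∀ s ∈ Icc (t i) (t (i + 1)), Φ s - s ≤ Φ (t i) - t i :=
    fun i hi s hs => hslope _ (hsub i hi ⟨le_rfl, hle i hi⟩) s (hsub i hi hs) hs.1
  have hint : ∀ i < k, IntervalIntegrable (fun s => cot (Φ s)) volume (t i) (t (i + 1)) :=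
    fun i hi => intervalIntegrable_cot_comp (hle i hi) (hΦc.mono (hsub i hi)) fun s hs =>
      ⟨hpos s (hsub i hi hs), by linarith [hslope' i hi s hs, hs.2, hgood i hi, pi_pos]⟩
  set g : ℕ → ℝ := fun i => log (Φ (t i)) - 2 * t i
  have hlocal : ∀ i < k, log 2 + (g (i + 1) - g i) ≤ 2 * ∫ s in t i..t (i + 1), cot (Φ s) := by
    intro i hi
    have hI := log_add_sub_log_sub_le_integral_cot (hle i hi) (hΦc.mono (hsub i hi))
      (fun s hs => hpos s (hsub i hi hs)) (hslope' i hi) (hgood i hi)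
    have hx : 2 * ε ≤ Φ (t i) := hΦ2ε _ (hsub i hi ⟨le_rfl, hle i hi⟩)
    have hx0 : 0 < Φ (t i) := by linarith
    have hy : 0 < Φ (t (i + 1)) := hpos _ (hsub i hi ⟨hle i hi, le_rfl⟩)
    -- `(x + h)² - 2x(ε + h) = x(x - 2ε) + h²`
    have hsq : 2 * Φ (t i) * Φ (t (i + 1)) ≤ (Φ (t i) + (t (i + 1) - t i)) ^ 2 := by
      rw [hstep i hi]; nlinarith [sq_nonneg (t (i + 1) - t i)]
    have hlog := log_le_log (by positivity) hsq
    rw [log_pow, log_mul (by positivity) hy.ne', log_mul two_ne_zero hx0.ne'] at hlog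
    simp only [g]
    push_cast at hlog
    linarith
  have hsum := Finset.sum_le_sum fun i (hi : i ∈ Finset.range k) =>
    hlocal i (Finset.mem_range.mp hi)
  rw [Finset.sum_add_distrib, Finset.sum_range_sub, Finset.sum_const, Finset.card_range,
    ← Finset.mul_sum, intervalIntegral.sum_integral_adjacent_intervals hint, nsmul_eq_mul] at hsum
  simp only [g] at hsum
  linarith
lemma cast_le_of_forall_run_length_le (P : ℕ → Prop) [DecidablePred P] {A : ℝ} (N : ℕ)
    (hrun : ∀ m k, m + k ≤ N → (∀ i < k, P (m + i)) → (k : ℝ) ≤ A) :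
    (N : ℝ) ≤ (#{n ∈ Finset.range N | ¬ P n} + 1) * (A + 1) := by
  induction N using Nat.strong_induction_on with
  | _ N ih =>
  have hA : 0 ≤ A := by simpa using hrun 0 0 (Nat.zero_le N) (by simp)
  set B := {n ∈ Finset.range N | ¬ P n}
  rcases B.eq_empty_or_nonempty with hB | hB
  · have hN := hrun 0 N (by simp) fun i hi => by
      simpa [B, hi] using Finset.eq_empty_iff_forall_notMem.mp hB i
    rw [hB, Finset.card_empty]
    push_cast
    linarith
  -- the last bad index `b` is followed by a run of length `N - b - 1`
  set b := B.max' hB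
  have hbB : b ∈ B := B.max'_mem hB
  have hbN : b < N := by simpa [B] using (Finset.mem_filter.mp hbB).1
  have htail := hrun (b + 1) (N - b - 1) (by omega) fun i hi => by
    by_contra h
    have : b + 1 + i ≤ b := B.le_max' _ (by simp [B, h]; omega)
    omega
  have hhead := ih b hbN fun m k hmk => hrun m k (by omega)
  have hcard : #{n ∈ Finset.range b | ¬ P n} + 1 ≤ #B := by
    rw [← Finset.card_insert_of_notMem (s := {n ∈ Finset.range b | ¬ P n}) (a := b) (by simp)]
    refine Finset.card_le_card fun n hn => ?_
    rcases Finset.mem_insert.mp hn with rfl | hn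
    · exact hbB
    · simp only [B, Finset.mem_filter, Finset.mem_range] at hn ⊢
      exact ⟨by omega, hn.2⟩
  have hcard' : (#{n ∈ Finset.range b | ¬ P n} : ℝ) + 1 ≤ #B := by exact_mod_cast hcard
  rw [Nat.cast_sub (by omega), Nat.cast_sub (by omega)] at htail
  push_cast at htail
  nlinarith

lemma card_filter_lt_sub_mul_le {t : ℕ → ℝ} {N : ℕ} (δ : ℝ) (ht : ∀ n < N, t n ≤ t (n + 1)) :
    #{n ∈ Finset.range N | δ < t (n + 1) - t n} * δ ≤ t N - t 0 :=
  calc #{n ∈ Finset.range N | δ < t (n + 1) - t n} * δ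
      ≤ ∑ n ∈ Finset.range N with δ < t (n + 1) - t n, (t (n + 1) - t n) := by
        rw [← nsmul_eq_mul]
        exact Finset.card_nsmul_le_sum _ (fun n => t (n + 1) - t n) δ
          fun n hn => (Finset.mem_filter.mp hn).2.le
    _ ≤ ∑ n ∈ Finset.range N, (t (n + 1) - t n) :=
        Finset.sum_le_sum_of_subset_of_nonneg (Finset.filter_subset _ _)
          fun n hn _ => sub_nonneg.mpr (ht n (Finset.mem_range.mp hn))
    _ = t N - t 0 := Finset.sum_range_sub t N

lemma card_filter_not_add_sub_le_pi_div_two_le {ε : ℝ} {Φ : ℝ → ℝ} {t : ℕ → ℝ} {N : ℕ}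
    (hε6 : ε ≤ π / 6) (ht : ∀ n < N, t n ≤ t (n + 1)) (hspan : t N - t 0 ≤ 2 * π)
    (hstep : ∀ n < N, Φ (t (n + 1)) = ε + (t (n + 1) - t n)) :
    #{n ∈ Finset.range N | ¬ Φ (t n) + (t (n + 1) - t n) ≤ π / 2} ≤ 25 := by
  set S := {n ∈ Finset.range N | π / 6 < t (n + 1) - t n}
  have hS : #S ≤ 12 := by
    by_contra! h13
    have : (13 : ℝ) ≤ #S := by exact_mod_cast h13
    nlinarith [card_filter_lt_sub_mul_le (π / 6) ht, pi_pos]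
  -- for `n ≥ 1`, `Φ (t n) = ε + (t n - t (n - 1))`: a bad step `n` forces a step longer than
  -- `π / 6` at `n - 1` or at `n`
  have hsub : {n ∈ Finset.range N | ¬ Φ (t n) + (t (n + 1) - t n) ≤ π / 2}
      ⊆ insert 0 (S ∪ S.image (· + 1)) := by
    intro n hn
    simp only [S, Finset.mem_filter, Finset.mem_range, not_le, Finset.mem_insert,
      Finset.mem_union, Finset.mem_image] at hn ⊢
    obtain _ | m := n
    · exact Or.inl rfl
    · have hΦm := hstep m (by omega)
      by_cases hm : π / 6 < t (m + 1) - t m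
      · exact Or.inr (Or.inr ⟨m, ⟨by omega, hm⟩, rfl⟩)
      · exact Or.inr (Or.inl ⟨hn.1, by linarith⟩)
  calc #{n ∈ Finset.range N | ¬ Φ (t n) + (t (n + 1) - t n) ≤ π / 2}
      ≤ #(insert 0 (S ∪ S.image (· + 1))) := Finset.card_le_card hsub
    _ ≤ #(S ∪ S.image (· + 1)) + 1 := Finset.card_insert_le _ _
    _ ≤ #S + #S + 1 := by
        gcongr
        exact (Finset.card_union_le _ _).trans (Nat.add_le_add_left Finset.card_image_le _)
    _ ≤ 25 := by omega

lemma abs_log_ge_of_le_pi_div_six {ε : ℝ} (hε : 0 < ε) (hε6 : ε ≤ π / 6) :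
    47 / 100 ≤ |log ε| := by
  have hlog : log ε ≤ ε - 1 := log_le_sub_one_of_pos hε
  rw [abs_of_neg (by linarith [pi_lt_d2])]
  linarith [pi_lt_d2]

lemma cast_le_fifty_mul_abs_log {ε x y I D : ℝ} {k : ℕ} (hε : 0 < ε) (hε6 : ε ≤ π / 6)
    (hk : k * log 2 ≤ 2 * I + log x - log y + 2 * D) (hI : I ≤ |log ε|) (hx0 : 0 < x)
    (hx : x ≤ π) (hy : 2 * ε ≤ y) (hD : D ≤ 2 * π) :
    (k : ℝ) ≤ 50 * |log ε| := by
  have hL := abs_log_ge_of_le_pi_div_six hε hε6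
  have hlogε : log ε = -|log ε| := by
    rw [abs_of_neg (log_neg hε (by linarith [pi_lt_d2]))]; ring
  have hlogx : log x ≤ π - 1 :=
    (log_le_log hx0 hx).trans (by linarith [log_le_sub_one_of_pos pi_pos])
  have hlogy : log 2 - |log ε| ≤ log y := by
    rw [sub_eq_add_neg, ← hlogε, ← log_mul two_ne_zero hε.ne']
    exact log_le_log (by positivity) hy
  have hk2 : (k : ℝ) * 0.6931 ≤ k * log 2 :=
    mul_le_mul_of_nonneg_left (by linarith [log_two_gt_d9]) k.cast_nonneg
  linarith [pi_lt_d2, log_two_gt_d9]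

/-- bound on the length of the sequences produced by the stencil
construction. There is an absolute constant `C` such that any finite sequence
`0 = t₀ < t₁ < ⋯ < t_N ≤ 2π` with `Φ(t_{n+1}) = ε + (t_{n+1} − t_n)` satisfies
`N ≤ C·|ln ε|`, whenever `Φ : [0,2π] → (0,π)` is continuous, `Φ ≥ 2ε`, `Φ − id` is
non-increasing, and `∫_t^{t'} cot Φ ≤ |ln ε|` for all `0 ≤ t ≤ t' ≤ 2π`. -/
theorem stmt17 : ∃ C : ℝ, 0 < C ∧
    ∀ ε : ℝ, 0 < ε → ε ≤ Real.pi / 6 →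
    ∀ Φ : ℝ → ℝ,
      ContinuousOn Φ (Set.Icc 0 (2 * Real.pi)) →
      (∀ t ∈ Set.Icc (0:ℝ) (2 * Real.pi), Φ t ∈ Set.Ioo 0 Real.pi) →
      (∀ t ∈ Set.Icc (0:ℝ) (2 * Real.pi), 2 * ε ≤ Φ t) →
      (∀ t ∈ Set.Icc (0:ℝ) (2 * Real.pi), ∀ t' ∈ Set.Icc (0:ℝ) (2 * Real.pi),
        t ≤ t' → Φ t' - t' ≤ Φ t - t) →
      (∀ t t' : ℝ, 0 ≤ t → t ≤ t' → t' ≤ 2 * Real.pi →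
        (∫ s in t..t', Real.cot (Φ s)) ≤ |Real.log ε|) →
    ∀ N : ℕ, ∀ t : ℕ → ℝ,
      t 0 = 0 →
      (∀ n : ℕ, n < N → t n < t (n + 1)) →
      t N ≤ 2 * Real.pi →
      (∀ n : ℕ, n < N → Φ (t (n + 1)) = ε + (t (n + 1) - t n)) →
      (N : ℝ) ≤ C * |Real.log ε| := by
  refine ⟨2000, by norm_num, ?_⟩
  intro ε hε hε6 Φ hΦc hΦ hΦ2ε hslope hint N t ht0 htlt htN hstep
  have ht : MonotoneOn t (Iic N) :=
    monotoneOn_of_le_add_one ordConnected_Iic fun n _ _ hn => (htlt n hn).le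
  have htI : ∀ n ≤ N, t n ∈ Icc 0 (2 * π) := fun n hn =>
    ⟨ht0 ▸ ht (by simp) hn (Nat.zero_le n), (ht hn (by simp) hn).trans htN⟩
  have hruns : ∀ m k, m + k ≤ N →
      (∀ i < k, Φ (t (m + i)) + (t (m + i + 1) - t (m + i)) ≤ π / 2) →
      (k : ℝ) ≤ 50 * |log ε| := by
    intro m k hmk hgood
    have hm := htI m (by omega)
    have hmk' := htI (m + k) hmk
    have hsub : Icc (t m) (t (m + k)) ⊆ Icc 0 (2 * π) := Icc_subset_Icc hm.1 hmk'.2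
    have hrun := mul_log_two_le_integral_cot (t := fun i => t (m + i)) hε (hΦc.mono hsub)
      (fun s hs => hΦ2ε s (hsub hs)) (fun s hs s' hs' => hslope s (hsub hs) s' (hsub hs'))
      (fun i hi j hj hij => ht (by simp at hi ⊢; omega) (by simp at hj ⊢; omega) (by omega))
      (fun i hi => hstep (m + i) (by omega)) hgood
    simp only [Nat.add_zero] at hrun
    exact cast_le_fifty_mul_abs_log hε hε6 hrun
      (hint _ _ hm.1 (ht (by simp; omega) (by simpa using hmk) (by omega)) hmk'.2)
      (hΦ _ hm).1 (hΦ _ hm).2.le (hΦ2ε _ hmk') (by linarith [hm.1, hmk'.2])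
  have hN := cast_le_of_forall_run_length_le
    (fun n => Φ (t n) + (t (n + 1) - t n) ≤ π / 2) N hruns
  have hbad : (#{n ∈ Finset.range N | ¬ Φ (t n) + (t (n + 1) - t n) ≤ π / 2} : ℝ) ≤ 25 := by
    exact_mod_cast card_filter_not_add_sub_le_pi_div_two_le hε6 (fun n hn => (htlt n hn).le)
      (by linarith) hstep
  nlinarith [abs_log_ge_of_le_pi_div_six hε hε6]
end
end

section
/- Let g : [0,∞) → (−1,1) be continuous, and for z ∈ ℝ² ∖ {0}, u ∈ ℝ², define F_z(u) := ‖u‖ − (g(‖z‖)/‖z‖)·⟨z^⊥, u⟩, where z^⊥ denotes the rotation of z by π/2. Then for every z ∈ ℝ² ∖ {0}, the infimum of ∫ from 0 to 1 of F_{γ(t)}(γ'(t)) dt, taken over all C¹ paths γ : [0,1] → ℝ² with γ(0) = z, γ(1) = 0 and γ(t) ≠ 0 for all t ∈ [0,1), equals ∫ from 0 to ‖z‖ of √(1 − g(r)²) dr. -/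
open scoped RealInnerProductSpace
open MeasureTheory Real

noncomputable section

/-!
Write `q(r) = √(1 - g(r)²)` and `Φ(r) = ∫₀ʳ q`. The vector `g(‖w‖) w^⊥ - q(‖w‖) w` has length
`‖w‖`, so Cauchy–Schwarz gives `F_w(u) ≥ -q(‖w‖) ⟨w, u⟩ / ‖w‖`: along any admissible path the
integrand dominates `-(d/dt) Φ(‖γ t‖)`, and the length is at least `Φ(‖z‖)`.

Conversely, along the spiral `γ t = (1 - t) R_{θ t} z` the integrand is `‖z‖ (√(1 + s²) - g s)`
with `s = (1 - t) θ'`, minimised at `s = g / q` with value `‖z‖ q`. That exact choice makes `θ`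
diverge logarithmically at the origin, so take `s = (1 - tⁿ) g / q` instead, i.e.
`θ' = (1 + t + ⋯ + tⁿ⁻¹) g / q`, which is continuous; convexity in `s` bounds the extra cost by
`‖z‖ ∫₀¹ tⁿ = ‖z‖ / (n + 1)`.
-/

open Set

lemma perp_smul (c : ℝ) (v : E2) : perp (c • v) = c • perp v := by
  ext i; fin_cases i <;> simp [perp, mk2]

lemma inner_perp_self (v : E2) : ⟪perp v, v⟫ = 0 := by
  simp [perp, mk2, PiLp.inner_apply, Fin.sum_univ_two]; ring

lemma norm_perp (v : E2) : ‖perp v‖ = ‖v‖ := by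
  simp [perp, mk2, EuclideanSpace.norm_eq, Fin.sum_univ_two, add_comm]

lemma continuous_perp : Continuous perp := by
  unfold perp mk2; fun_prop

lemma norm_smul_add_smul_perp (c d : ℝ) (v : E2) :
    ‖c • v + d • perp v‖ = √(c ^ 2 + d ^ 2) * ‖v‖ := by
  have hsq : ‖c • v + d • perp v‖ ^ 2 = (c ^ 2 + d ^ 2) * ‖v‖ ^ 2 := by
    rw [norm_add_sq_real, norm_smul, norm_smul, real_inner_smul_left, real_inner_smul_right,
      real_inner_comm, inner_perp_self, norm_perp, Real.norm_eq_abs, Real.norm_eq_abs]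
    simp only [mul_pow, sq_abs]
    ring
  rw [← Real.sqrt_sq (norm_nonneg (c • v + d • perp v)), hsq, Real.sqrt_mul (by positivity),
    Real.sqrt_sq (norm_nonneg v)]

lemma inner_perp_smul_add_smul_perp (c d : ℝ) (v : E2) :
    ⟪perp v, c • v + d • perp v⟫ = d * ‖v‖ ^ 2 := by
  rw [inner_add_right, real_inner_smul_right, real_inner_smul_right, inner_perp_self,
    real_inner_self_eq_norm_sq, norm_perp]
  ring

lemma rot2_eq (θ : ℝ) (w : E2) : rot2 θ w = cos θ • w + sin θ • perp w := by
  ext i; fin_cases i <;> simp [rot2, perp, mk2] <;> ring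

lemma perp_rot2 (θ : ℝ) (w : E2) : perp (rot2 θ w) = (-sin θ) • w + cos θ • perp w := by
  ext i; fin_cases i <;> simp [rot2, perp, mk2] <;> ring

lemma norm_rot2 (θ : ℝ) (w : E2) : ‖rot2 θ w‖ = ‖w‖ := by
  rw [rot2_eq, norm_smul_add_smul_perp, cos_sq_add_sin_sq, Real.sqrt_one, one_mul]

lemma rot2_zero (w : E2) : rot2 0 w = w := by
  simp [rot2_eq]

lemma hasDerivAt_rot2 {θ : ℝ → ℝ} {ω t : ℝ} (h : HasDerivAt θ ω t) (w : E2) :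
    HasDerivAt (fun t => rot2 (θ t) w) (ω • perp (rot2 (θ t) w)) t := by
  rw [show (fun t => rot2 (θ t) w) = fun t => cos (θ t) • w + sin (θ t) • perp w from
    funext fun t => rot2_eq _ _]
  refine ((h.cos.smul_const w).add (h.sin.smul_const (perp w))).congr_deriv ?_
  rw [perp_rot2]
  module

lemma contDiff_rot2 {θ : ℝ → ℝ} {n : WithTop ℕ∞} (h : ContDiff ℝ n θ) (w : E2) :
    ContDiff ℝ n (fun t => rot2 (θ t) w) := by
  simp only [rot2_eq]
  exact (h.cos.smul contDiff_const).add (h.sin.smul contDiff_const)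

def spiralNorm (g : ℝ → ℝ) (z u : E2) : ℝ := ‖u‖ - (g ‖z‖ / ‖z‖) * ⟪perp z, u⟫

lemma HasDerivAt.norm {F : Type*} [NormedAddCommGroup F] [InnerProductSpace ℝ F] {γ : ℝ → F}
    {v : F} {t : ℝ} (h : HasDerivAt γ v t) (h0 : γ t ≠ 0) :
    HasDerivAt (fun s => ‖γ s‖) (⟪γ t, v⟫ / ‖γ t‖) t := by
  have hsqrt := (Real.hasDerivAt_sqrt (pow_ne_zero 2 (norm_ne_zero_iff.2 h0))).comp t h.norm_sq
  simp only [Function.comp_def, Real.sqrt_sq (norm_nonneg _)] at hsqrt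
  refine hsqrt.congr_deriv ?_
  field_simp [norm_ne_zero_iff.2 h0]

section
variable {g : ℝ → ℝ}

lemma neg_mul_inner_div_le_spiralNorm {w : E2} (hg : |g ‖w‖| ≤ 1) (u : E2) :
    -(√(1 - g ‖w‖ ^ 2) * (⟪w, u⟫ / ‖w‖)) ≤ spiralNorm g w u := by
  rcases eq_or_ne w 0 with rfl | hw
  · simp [spiralNorm]
  set G := g ‖w‖
  set q := √(1 - G ^ 2)
  have hw' : 0 < ‖w‖ := norm_pos_iff.2 hw
  have hCS : ⟪(-q) • w + G • perp w, u⟫ ≤ ‖w‖ * ‖u‖ := by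
    have hqG : q ^ 2 + G ^ 2 = 1 := by
      rw [Real.sq_sqrt (by nlinarith [abs_le.1 hg])]; ring
    calc ⟪(-q) • w + G • perp w, u⟫ ≤ ‖(-q) • w + G • perp w‖ * ‖u‖ := real_inner_le_norm _ _
      _ = ‖w‖ * ‖u‖ := by rw [norm_smul_add_smul_perp, neg_sq, hqG, Real.sqrt_one, one_mul]
  rw [inner_add_left, real_inner_smul_left, real_inner_smul_left] at hCS
  rw [spiralNorm, ← sub_nonneg]
  have : ‖u‖ - G / ‖w‖ * ⟪perp w, u⟫ - -(q * (⟪w, u⟫ / ‖w‖))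
      = (‖w‖ * ‖u‖ - (-q * ⟪w, u⟫ + G * ⟪perp w, u⟫)) / ‖w‖ := by
    field_simp; ring
  rw [this]
  exact div_nonneg (by linarith) hw'.le

lemma abs_spiralNorm_le {w : E2} (hg : |g ‖w‖| ≤ 1) (u : E2) : |spiralNorm g w u| ≤ 2 * ‖u‖ := by
  have hinner : |g ‖w‖ / ‖w‖ * ⟪perp w, u⟫| ≤ ‖u‖ := by
    rcases eq_or_ne w 0 with rfl | hw
    · simp
    have hw' : 0 < ‖w‖ := norm_pos_iff.2 hw
    calc |g ‖w‖ / ‖w‖ * ⟪perp w, u⟫| = |g ‖w‖| * (|⟪perp w, u⟫| / ‖w‖) := by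
          rw [abs_mul, abs_div, abs_of_pos hw']; ring
      _ ≤ 1 * ‖u‖ := by
          gcongr
          rw [div_le_iff₀ hw', mul_comm, ← norm_perp w]
          exact abs_real_inner_le_norm _ _
      _ = ‖u‖ := one_mul _
  rw [spiralNorm, two_mul]
  exact (abs_sub _ _).trans (add_le_add (abs_norm u).le hinner)

lemma ContinuousOn.spiralNorm (hg : Continuous g) {s : Set ℝ} {γ u : ℝ → E2}
    (hγ : ContinuousOn γ s) (hu : ContinuousOn u s) (hne : ∀ t ∈ s, γ t ≠ 0) :
    ContinuousOn (fun t => _root_.spiralNorm g (γ t) (u t)) s :=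
  hu.norm.sub (((hg.comp_continuousOn hγ.norm).div hγ.norm fun t ht =>
    norm_ne_zero_iff.2 (hne t ht)).mul ((continuous_perp.comp_continuousOn hγ).inner hu))

variable (hgc : Continuous g) (hg : ∀ r, |g r| ≤ 1) {γ : ℝ → E2}
  (hγ : ContDiffOn ℝ 1 γ (Icc 0 1)) (hne : ∀ t ∈ Ico (0 : ℝ) 1, γ t ≠ 0)
include hgc hg hγ hne

lemma integrableOn_spiralNorm :
    IntegrableOn (fun t => spiralNorm g (γ t) (derivWithin γ (Icc 0 1) t)) (Icc 0 1) := by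
  have hu := hγ.continuousOn_derivWithin (uniqueDiffOn_Icc one_pos) le_rfl
  obtain ⟨C, hC⟩ := isCompact_Icc.exists_bound_of_continuousOn hu
  rw [integrableOn_Icc_iff_integrableOn_Ico]
  refine IntegrableOn.of_bound (by simp) ?_ (2 * C) ?_
  · exact ((hγ.continuousOn.mono Ico_subset_Icc_self).spiralNorm hgc
      (hu.mono Ico_subset_Icc_self) hne).aestronglyMeasurable measurableSet_Ico
  · refine (ae_restrict_iff' measurableSet_Ico).2 (Filter.Eventually.of_forall fun t ht => ?_)
    calc ‖spiralNorm g (γ t) (derivWithin γ (Icc 0 1) t)‖ ≤ 2 * ‖derivWithin γ (Icc 0 1) t‖ :=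
          abs_spiralNorm_le (hg _) _
      _ ≤ 2 * C := by gcongr; exact hC t (Ico_subset_Icc_self ht)

theorem integral_sqrt_le_integral_spiralNorm (hγ1 : γ 1 = 0) :
    ∫ r in (0 : ℝ)..‖γ 0‖, √(1 - g r ^ 2)
      ≤ ∫ t in (0 : ℝ)..1, spiralNorm g (γ t) (derivWithin γ (Icc 0 1) t) := by
  set Φ : ℝ → ℝ := fun r => ∫ s in (0 : ℝ)..r, √(1 - g s ^ 2)
  have hf : Continuous fun r => √(1 - g r ^ 2) := by fun_prop
  have hΦ : ∀ r, HasDerivAt Φ (√(1 - g r ^ 2)) r := fun r =>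
    (hf.integral_hasStrictDerivAt 0 r).hasDerivAt
  have hΦc : Continuous Φ := continuous_iff_continuousAt.2 fun r => (hΦ r).continuousAt
  set u := derivWithin γ (Icc 0 1)
  calc ∫ r in (0 : ℝ)..‖γ 0‖, √(1 - g r ^ 2) = -Φ ‖γ 1‖ - -Φ ‖γ 0‖ := by simp [Φ, hγ1]
    _ ≤ ∫ t in (0 : ℝ)..1, spiralNorm g (γ t) (u t) := by
      refine intervalIntegral.sub_le_integral_of_hasDeriv_right_of_le zero_le_one
        (g' := fun t => -(√(1 - g ‖γ t‖ ^ 2) * (⟪γ t, u t⟫ / ‖γ t‖)))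
        (hΦc.comp_continuousOn hγ.continuousOn.norm).neg (fun t ht => ?_)
        (integrableOn_spiralNorm hgc hg hγ hne) fun t _ => neg_mul_inner_div_le_spiralNorm (hg _) _
      have hγt : HasDerivAt γ (u t) t :=
        ((hγ.differentiableOn one_ne_zero t (Ioo_subset_Icc_self ht)).hasDerivWithinAt).hasDerivAt
          (Icc_mem_nhds ht.1 ht.2)
      exact ((hΦ _).comp t (hγt.norm (hne t (Ioo_subset_Ico_self ht)))).neg.hasDerivWithinAt

end

def spiral (z : E2) (θ : ℝ → ℝ) (t : ℝ) : E2 := (1 - t) • rot2 (θ t) z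

section
variable {z : E2} {θ : ℝ → ℝ}

lemma spiral_zero (hθ : θ 0 = 0) : spiral z θ 0 = z := by
  simp [spiral, hθ, rot2_zero]

lemma spiral_one : spiral z θ 1 = 0 := by
  simp [spiral]

lemma norm_spiral {t : ℝ} (ht : t ≤ 1) : ‖spiral z θ t‖ = (1 - t) * ‖z‖ := by
  rw [spiral, norm_smul, norm_rot2, Real.norm_of_nonneg (sub_nonneg.2 ht)]

lemma spiral_ne_zero (hz : z ≠ 0) {t : ℝ} (ht : t < 1) : spiral z θ t ≠ 0 := by
  rw [← norm_pos_iff, norm_spiral ht.le]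
  exact mul_pos (sub_pos.2 ht) (norm_pos_iff.2 hz)

lemma contDiff_spiral {n : WithTop ℕ∞} (hθ : ContDiff ℝ n θ) : ContDiff ℝ n (spiral z θ) :=
  (contDiff_const.sub contDiff_id).smul (contDiff_rot2 hθ z)

lemma hasDerivAt_spiral {ω t : ℝ} (h : HasDerivAt θ ω t) :
    HasDerivAt (spiral z θ)
      ((-1 : ℝ) • rot2 (θ t) z + ((1 - t) * ω) • perp (rot2 (θ t) z)) t := by
  refine (((hasDerivAt_id t).const_sub 1).smul (hasDerivAt_rot2 h z)).congr_deriv ?_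
  simp only [id]
  module

lemma spiralNorm_spiral (g : ℝ → ℝ) {ω t : ℝ} (ht : t ≤ 1) :
    spiralNorm g (spiral z θ t)
        ((-1 : ℝ) • rot2 (θ t) z + ((1 - t) * ω) • perp (rot2 (θ t) z))
      = ‖z‖ * (√(1 + ((1 - t) * ω) ^ 2) - g ((1 - t) * ‖z‖) * ((1 - t) * ω)) := by
  rw [spiralNorm, norm_spiral ht, norm_smul_add_smul_perp, norm_rot2, spiral, perp_smul,
    real_inner_smul_left, inner_perp_smul_add_smul_perp, norm_rot2]
  rcases eq_or_ne (1 - t) 0 with h | h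
  · simp [h]
  rcases eq_or_ne ‖z‖ 0 with hz | hz
  · simp [hz]
  field_simp

end

lemma sqrt_one_add_sq_sub_mul_le {G c : ℝ} (hG : |G| < 1) (hc0 : 0 ≤ c) (hc1 : c ≤ 1) :
    √(1 + (c * (G / √(1 - G ^ 2))) ^ 2) - G * (c * (G / √(1 - G ^ 2)))
      ≤ √(1 - G ^ 2) + (1 - c) := by
  set q := √(1 - G ^ 2)
  have hG2 : G ^ 2 < 1 := by nlinarith [abs_lt.1 hG, sq_abs G, abs_nonneg G]
  have hq : 0 < q := Real.sqrt_pos.2 (by linarith)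
  have hq2 : q ^ 2 = 1 - G ^ 2 := Real.sq_sqrt (by linarith)
  -- `s ↦ √(1 + s²)` is convex and equals `1 / q` at the optimal rate `s = G / q`
  have hconv : √(1 + (c * (G / q)) ^ 2) ≤ (1 - c) + c / q := by
    have hR : 1 / q = √(1 + (G / q) ^ 2) := by
      rw [eq_comm, Real.sqrt_eq_iff_mul_self_eq (by positivity) (by positivity)]
      field_simp
      linarith
    have hR1 : 1 ≤ 1 / q := by
      rw [hR, Real.one_le_sqrt]; nlinarith [sq_nonneg (G / q)]
    have hRsq : (1 / q) ^ 2 = 1 + (G / q) ^ 2 := by rw [hR, Real.sq_sqrt (by positivity)]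
    have hdiff : ((1 - c) + c / q) ^ 2 - (1 + (c * (G / q)) ^ 2)
        = 2 * (c * (1 - c)) * (1 / q - 1) := by
      linear_combination c ^ 2 * hRsq
    rw [Real.sqrt_le_left (add_nonneg (sub_nonneg.2 hc1) (div_nonneg hc0 hq.le))]
    nlinarith [mul_nonneg (mul_nonneg hc0 (sub_nonneg.2 hc1)) (sub_nonneg.2 hR1)]
  calc √(1 + (c * (G / q)) ^ 2) - G * (c * (G / q)) ≤ (1 - c) + c / q - G * (c * (G / q)) := by
        linarith
    _ = (1 - c) + c * q := by
        field_simp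
        linear_combination (-c) * hq2
    _ ≤ q + (1 - c) := by nlinarith

lemma integral_mul_comp_one_sub_mul (f : ℝ → ℝ) (a : ℝ) :
    ∫ t in (0 : ℝ)..1, a * f ((1 - t) * a) = ∫ r in (0 : ℝ)..a, f r := by
  rcases eq_or_ne a 0 with rfl | ha
  · simp
  simp_rw [intervalIntegral.integral_const_mul, show ∀ t, (1 - t) * a = a - a * t from
    fun t => by ring, intervalIntegral.integral_comp_sub_mul _ ha]
  simp [ha]

def spiralRate (g : ℝ → ℝ) (a : ℝ) (n : ℕ) (t : ℝ) : ℝ :=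
  g ((1 - t) * a) / √(1 - g ((1 - t) * a) ^ 2) * ∑ k ∈ Finset.range n, t ^ k

def spiralPath (g : ℝ → ℝ) (z : E2) (n : ℕ) : ℝ → E2 :=
  spiral z fun t => ∫ s in (0 : ℝ)..t, spiralRate g ‖z‖ n s

lemma one_sub_mul_spiralRate (g : ℝ → ℝ) (a : ℝ) (n : ℕ) (t : ℝ) :
    (1 - t) * spiralRate g a n t
      = (1 - t ^ n) * (g ((1 - t) * a) / √(1 - g ((1 - t) * a) ^ 2)) := by
  rw [spiralRate, ← mul_neg_geom_sum t n]
  ring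

section
variable {g : ℝ → ℝ} (hgc : Continuous g) (hg : ∀ r, |g r| < 1) (z : E2) (n : ℕ)
include hgc hg

lemma continuous_spiralRate (a : ℝ) : Continuous (spiralRate g a n) := by
  refine Continuous.mul (Continuous.div (by fun_prop) (by fun_prop) fun t => ?_) (by fun_prop)
  exact (Real.sqrt_pos.2 (by nlinarith [abs_lt.1 (hg ((1 - t) * a)), sq_abs (g ((1 - t) * a))])).ne'

lemma contDiff_spiralPath : ContDiff ℝ 1 (spiralPath g z n) := by
  refine contDiff_spiral (contDiff_one_iff_deriv.2 ⟨?_, ?_⟩)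
  · exact intervalIntegral.differentiable_integral_of_continuous (continuous_spiralRate hgc hg n _)
  · rw [funext ((continuous_spiralRate hgc hg n ‖z‖).deriv_integral _ 0)]
    exact continuous_spiralRate hgc hg n _

theorem integral_spiralNorm_spiralPath_le :
    ∫ t in (0 : ℝ)..1, spiralNorm g (spiralPath g z n t)
        (derivWithin (spiralPath g z n) (Icc 0 1) t)
      ≤ (∫ r in (0 : ℝ)..‖z‖, √(1 - g r ^ 2)) + ‖z‖ / (n + 1) := by
  set ω := spiralRate g ‖z‖ n
  set G : ℝ → ℝ := fun t => g ((1 - t) * ‖z‖)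
  have hω : Continuous ω := continuous_spiralRate hgc hg n ‖z‖
  have hq : Continuous fun t => √(1 - G t ^ 2) := by fun_prop
  calc _ = ∫ t in (0 : ℝ)..1, ‖z‖ * (√(1 + ((1 - t) * ω t) ^ 2) - G t * ((1 - t) * ω t)) := by
        refine intervalIntegral.integral_congr fun t ht => ?_
        rw [uIcc_of_le zero_le_one] at ht
        have hγ := hasDerivAt_spiral (z := z) (hω.integral_hasStrictDerivAt 0 t).hasDerivAt
        rw [spiralPath, hγ.hasDerivWithinAt.derivWithin (uniqueDiffOn_Icc one_pos t ht),
          spiralNorm_spiral g ht.2]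
    _ ≤ ∫ t in (0 : ℝ)..1, (‖z‖ * √(1 - G t ^ 2) + ‖z‖ * t ^ n) := by
        refine intervalIntegral.integral_mono_on zero_le_one
          ((by fun_prop : Continuous _).intervalIntegrable _ _)
          ((by fun_prop : Continuous _).intervalIntegrable _ _)
          fun t ht => ?_
        have hbound := sqrt_one_add_sq_sub_mul_le (hg ((1 - t) * ‖z‖))
          (sub_nonneg.2 (pow_le_one₀ ht.1 ht.2)) (sub_le_self _ (pow_nonneg ht.1 n))
        rw [sub_sub_cancel] at hbound
        rw [one_sub_mul_spiralRate, ← mul_add]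
        exact mul_le_mul_of_nonneg_left hbound (norm_nonneg z)
    _ = _ := by
        rw [intervalIntegral.integral_add ((hq.const_mul _).intervalIntegrable _ _)
          ((by fun_prop : Continuous _).intervalIntegrable _ _),
          integral_mul_comp_one_sub_mul (fun r => √(1 - g r ^ 2)),
          intervalIntegral.integral_const_mul, integral_pow]
        simp
        ring

end

/-- for the spiraling metric `F_z(u) = ‖u‖ − (g(‖z‖)/‖z‖)⟨z^⊥, u⟩`, the
infimum of the lengths of `C¹` paths joining `z` to the origin (and avoiding the origin
before time 1) equals `∫₀^{‖z‖} √(1 − g(r)²) dr`. -/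
theorem stmt19 (g : ℝ → ℝ) (hgc : ContinuousOn g (Set.Ici 0))
    (hgr : ∀ r : ℝ, 0 ≤ r → g r ∈ Set.Ioo (-1 : ℝ) 1)
    (Fm : E2 → E2 → ℝ)
    (hFm : ∀ z u : E2, Fm z u = ‖u‖ - (g ‖z‖ / ‖z‖) * ⟪perp z, u⟫)
    (z : E2) (hz : z ≠ 0) :
    sInf {L : ℝ | ∃ γ : ℝ → E2,
        ContDiffOn ℝ 1 γ (Set.Icc 0 1) ∧ γ 0 = z ∧ γ 1 = 0 ∧
        (∀ t ∈ Set.Ico (0:ℝ) 1, γ t ≠ 0) ∧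
        L = ∫ t in (0:ℝ)..1, Fm (γ t) (derivWithin γ (Set.Icc 0 1) t)}
      = ∫ r in (0:ℝ)..‖z‖, Real.sqrt (1 - g r ^ 2) := by
  -- only `g` on `[0, ∞)` matters, and its even extension is continuous on all of `ℝ`
  set G : ℝ → ℝ := fun r => g |r|
  have hGc : Continuous G := hgc.comp_continuous continuous_abs abs_nonneg
  have hG : ∀ r, |G r| < 1 := fun r => abs_lt.2 (hgr _ (abs_nonneg r))
  obtain rfl : Fm = spiralNorm G := by
    ext w u
    simp [G, hFm, spiralNorm]
  rw [intervalIntegral.integral_congr (g := fun r => √(1 - G r ^ 2)) fun r hr => by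
    rw [uIcc_of_le (norm_nonneg z)] at hr
    simp only [G, abs_of_nonneg hr.1]]
  set S := {L : ℝ | ∃ γ : ℝ → E2, ContDiffOn ℝ 1 γ (Icc 0 1) ∧ γ 0 = z ∧ γ 1 = 0 ∧
    (∀ t ∈ Ico (0:ℝ) 1, γ t ≠ 0) ∧
    L = ∫ t in (0:ℝ)..1, spiralNorm G (γ t) (derivWithin γ (Icc 0 1) t)}
  have hmem (n : ℕ) : ∫ t in (0:ℝ)..1, spiralNorm G (spiralPath G z n t)
      (derivWithin (spiralPath G z n) (Icc 0 1) t) ∈ S :=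
    ⟨_, (contDiff_spiralPath hGc hG z n).contDiffOn, spiral_zero (by simp), spiral_one,
      fun t ht => spiral_ne_zero hz ht.2, rfl⟩
  refine csInf_eq_of_forall_ge_of_forall_gt_exists_lt ⟨_, hmem 0⟩ ?_ fun w hw => ?_
  · rintro _ ⟨γ, hγ, rfl, hγ1, hne, rfl⟩
    exact integral_sqrt_le_integral_spiralNorm hGc (fun r => (hG r).le) hγ hne hγ1
  · obtain ⟨n, hn⟩ := exists_nat_gt (‖z‖ / (w - ∫ r in (0:ℝ)..‖z‖, √(1 - G r ^ 2)))
    refine ⟨_, hmem n, (integral_spiralNorm_spiralPath_le hGc hG z n).trans_lt ?_⟩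
    rw [← lt_sub_iff_add_lt', div_lt_iff₀ (by positivity)]
    rw [div_lt_iff₀ (sub_pos.2 hw)] at hn
    linarith
end
end
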